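/- arXiv:2308.01259 — 10 statements merged into one kernel-verified Lean document; each statement's English description precedes it below -/
import Mathlib

section
/- Let X be a topological space with more than one point and let κ be an infinite cardinal with d(X) ≤ κ. Then there exists a subset A of the product space X^(2^κ) such that |A| = κ, A is κ-dense in X^(2^κ), and for every x ∈ A the range {x(α) : α < 2^κ} is a finite set. -/
/-!
Identify the index set `2^κ` with the Cantor cube `J → Bool`, where `#J = κ`, and fix a dense
set `T ⊆ X` of size at most `κ` containing two distinct points `a`, `b`. The maps from the cube
to `T` that depend on finitely many coordinates have finite range, and there are only `κ` of
them. A basic open set constrains finitely many points `t` of the cube. Choose a finite `F ⊆ J`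
that separates `t` and admits a pattern `r : F → Bool` that is not the trace of any point of `t`.
For each `α ∉ F` there is then a finitary map that lies in the open set and takes the value `a`
or `b` at points with trace `r`, according to their `α`-coordinate. This gives `κ` distinct
points of the set inside the open set.
-/

open Cardinal

/-- A subset `A` of a topological space `Y` is `κ`-dense if `|A ∩ U| ≥ κ`
for every nonempty open `U ⊆ Y`. -/
def KDense {Y : Type*} [TopologicalSpace Y] (κ : Cardinal) (A : Set Y) : Prop :=
  ∀ U : Set Y, IsOpen U → U.Nonempty → κ ≤ #↥(A ∩ U)

/-- The density of a topological space: the smallest cardinality of a dense subset. -/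
noncomputable def density (X : Type u) [TopologicalSpace X] : Cardinal.{u} :=
  sInf {c : Cardinal.{u} | ∃ s : Set X, Dense s ∧ #s = c}

open Set Function

universe u

theorem exists_dense_mk_eq_density (X : Type u) [TopologicalSpace X] :
    ∃ s : Set X, Dense s ∧ #s = density X :=
  csInf_mem (s := {c | ∃ s : Set X, Dense s ∧ #s = c}) ⟨_, univ, dense_univ, rfl⟩

section KDense

variable {Y : Type u} [TopologicalSpace Y] {κ : Cardinal.{u}} {A : Set Y}

theorem KDense.le_mk [Nonempty Y] (hA : KDense κ A) : κ ≤ #A := by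
  simpa using hA univ isOpen_univ univ_nonempty

theorem KDense.image_homeomorph {Z : Type u} [TopologicalSpace Z] (hA : KDense κ A)
    (h : Y ≃ₜ Z) : KDense κ (h '' A) := by
  intro U hU hne
  rw [← image_inter_preimage, mk_image_eq h.injective]
  exact hA _ (hU.preimage h.continuous) (hne.preimage h.surjective)

end KDense

theorem DependsOn.finite_range {ι α β : Type*} [Finite α] {f : (ι → α) → β} {s : Set ι}
    (hs : s.Finite) (hf : DependsOn f s) : (range f).Finite := by
  cases isEmpty_or_nonempty β
  · exact toFinite _
  obtain ⟨g, rfl⟩ := dependsOn_iff_exists_comp.mp hf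
  have := hs.to_subtype
  exact (Set.finite_range g).subset (range_comp_subset_range _ _)

theorem Finset.exists_injOn_restrict {ι β : Type*} (t : Finset (ι → β)) :
    ∃ F : Finset ι, InjOn (fun i : ι → β => F.restrict i) t := by
  classical
  cases isEmpty_or_nonempty ι
  · exact ⟨∅, fun i _ i' _ _ => Subsingleton.elim i i'⟩
  have : ∀ i i' : ι → β, ∃ j, i ≠ i' → i j ≠ i' j := fun i i' =>
    if h : i = i' then ⟨Classical.arbitrary ι, absurd h⟩ else (ne_iff.mp h).imp fun _ hj _ => hj
  choose w hw using this
  refine ⟨t.biUnion fun i => t.image (w i), fun i hi i' hi' h => by_contra fun hne => hw i i' hne ?_⟩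
  exact congrFun h ⟨w i i', Finset.mem_biUnion.mpr ⟨i, hi, Finset.mem_image_of_mem _ hi'⟩⟩

theorem Finset.exists_injOn_restrict_and_forall_restrict_ne {J : Type*} [Infinite J]
    (t : Finset (J → Bool)) :
    ∃ F : Finset J, InjOn (fun i : J → Bool => F.restrict i) t ∧
      ∃ r : F → Bool, ∀ i ∈ t, F.restrict i ≠ r := by
  classical
  obtain ⟨F₀, hF₀⟩ := t.exists_injOn_restrict
  obtain ⟨F, hF₀F, hcard⟩ := Infinite.exists_superset_card_eq F₀ (F₀.card + t.card) (by omega)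
  refine ⟨F, fun i hi i' hi' h => hF₀ hi hi' (funext fun j => congrFun h ⟨j, hF₀F j.2⟩), ?_⟩
  have hlt : (t.image fun i : J → Bool => F.restrict i).card < (univ : Finset (F → Bool)).card :=
    calc _ ≤ t.card := Finset.card_image_le
      _ < 2 ^ t.card := Nat.lt_two_pow_self
      _ ≤ 2 ^ F.card := Nat.pow_le_pow_right two_pos (by omega)
      _ = _ := by simp
  obtain ⟨r, -, hr⟩ := Finset.exists_mem_notMem_of_card_lt_card hlt
  exact ⟨r, fun i hi hir => hr (Finset.mem_image.mpr ⟨i, hi, hir⟩)⟩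

section FinitaryMaps

variable {X : Type u} {J : Type u}

def finitaryMaps (J : Type u) (T : Set X) : Set ((J → Bool) → X) :=
  {x | (∃ F : Finset J, DependsOn x (F : Set J)) ∧ range x ⊆ T}

theorem finite_range_of_mem_finitaryMaps {T : Set X} {x : (J → Bool) → X}
    (hx : x ∈ finitaryMaps J T) : (range x).Finite :=
  let ⟨⟨F, hF⟩, _⟩ := hx
  hF.finite_range F.finite_toSet

theorem mk_finitaryMaps_le [Infinite J] {T : Set X} {κ : Cardinal.{u}} (hκ : ℵ₀ ≤ κ)
    (hJ : #J ≤ κ) (hT : #T ≤ κ) : #(finitaryMaps J T) ≤ κ := by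
  classical
  cases isEmpty_or_nonempty X
  · simp
  let Φ : (Σ F : Finset J, (↥(F : Set J) → Bool) → T) → (J → Bool) → X :=
    fun p i => p.2 ((p.1 : Set J).domRestrict i)
  have hsub : finitaryMaps J T ⊆ range Φ := by
    rintro x ⟨⟨F, hF⟩, hxT⟩
    obtain ⟨g, rfl⟩ := dependsOn_iff_exists_comp.mp hF
    have hg : ∀ r, g r ∈ T := fun r => hxT ⟨extend Subtype.val r fun _ => false,
      congrArg g (funext fun j => Subtype.val_injective.extend_apply _ _ j)⟩
    exact ⟨⟨F, fun r => ⟨g r, hg r⟩⟩, rfl⟩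
  calc #(finitaryMaps J T) ≤ #(range Φ) := mk_le_mk_of_subset hsub
    _ ≤ #(Σ F : Finset J, (↥(F : Set J) → Bool) → T) := mk_range_le
    _ ≤ sum fun _ : Finset J => κ := by
      rw [mk_sigma]
      refine sum_le_sum _ _ fun F => ?_
      rw [← power_def, mk_fintype (↥(F : Set J) → Bool), power_natCast]
      exact (power_le_power_right hT).trans (power_nat_le hκ)
    _ ≤ κ := by
      rw [sum_const', mk_finset_of_infinite]
      exact (mul_le_mul_left hJ κ).trans (mul_eq_self hκ).le

theorem exists_injOn_finitaryMaps [Infinite J] {T : Set X} (hT : T.Nontrivial)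
    (t : Finset (J → Bool)) {d : (J → Bool) → X} (hd : ∀ i ∈ t, d i ∈ T) :
    ∃ F : Finset J, ∃ y : J → (J → Bool) → X, (∀ α, y α ∈ finitaryMaps J T) ∧
      (∀ α, ∀ i ∈ t, y α i = d i) ∧ InjOn y (F : Set J)ᶜ := by
  classical
  obtain ⟨a, ha, b, hb, hab⟩ := hT
  obtain ⟨F, hinj, r, hr⟩ := t.exists_injOn_restrict_and_forall_restrict_ne
  set ρ : (J → Bool) → F → Bool := fun i => F.restrict i
  -- `y α` copies `d` on the points whose `F`-trace is that of a point of `t` (unique, as `F`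
  -- separates `t`), and elsewhere reads the coordinate `α`.
  let y : J → (J → Bool) → X := fun α i =>
    if ρ i ∈ ρ '' t then d (invFunOn ρ t (ρ i)) else if i α then a else b
  refine ⟨F, y, fun α => ⟨⟨insert α F, ?_⟩, ?_⟩, fun α i hi => ?_, fun α hα β hβ hαβ => ?_⟩
  · intro i i' h
    have hρ : ρ i = ρ i' := funext fun j => h j (by simp)
    simp only [y, hρ, h α (by simp)]
  · rintro _ ⟨i, rfl⟩
    dsimp only [y]
    split_ifs with h
    exacts [hd _ (invFunOn_mem h), ha, hb]
  · simp only [y, mem_image_of_mem ρ hi, if_true, hinj.leftInvOn_invFunOn hi]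
  · by_contra hne
    let q : J → Bool := fun j => if h : j ∈ F then r ⟨j, h⟩ else decide (j = α)
    have hq : ρ q ∉ ρ '' t := by
      rintro ⟨i, hi, hiq⟩
      exact hr i hi (hiq.trans (funext fun j => dif_pos j.2))
    have hqα : q α = true := by simp [q, show α ∉ F from hα]
    have hqβ : q β = false := by simp [q, show β ∉ F from hβ, Ne.symm hne]
    have hyq := congrFun hαβ q
    simp only [y, hq, if_false, hqα, hqβ, if_true, Bool.false_eq_true] at hyq
    exact hab hyq

theorem kDense_finitaryMaps [TopologicalSpace X] [Infinite J] {T : Set X}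
    (hTd : Dense T) (hT : T.Nontrivial) : KDense #J (finitaryMaps J T) := by
  intro U hU ⟨x, hx⟩
  obtain ⟨t, u, htu, htU⟩ := isOpen_pi_iff.mp hU x hx
  have : Nonempty X := ⟨x fun _ => false⟩
  choose! d hdT hdu using fun i (hi : i ∈ t) =>
    hTd.exists_mem_open (htu i hi).1 ⟨x i, (htu i hi).2⟩
  obtain ⟨F, y, hyA, hyd, hinj⟩ := exists_injOn_finitaryMaps hT t hdT
  have hyU : ∀ α, y α ∈ U := fun α => htU fun i hi => (hyd α i hi).symm ▸ hdu i hi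
  calc #J = #↥((F : Set J)ᶜ) := (mk_compl_of_infinite _ (F.finite_toSet.lt_aleph0.trans_le
        (infinite_iff.mp ‹_›))).symm
    _ = #(y '' (F : Set J)ᶜ) := (mk_image_eq_of_injOn _ _ hinj).symm
    _ ≤ #↥(finitaryMaps J T ∩ U) :=
      mk_le_mk_of_subset (image_subset_iff.mpr fun α _ => ⟨hyA α, hyU α⟩)

end FinitaryMaps

theorem exists_dense_nontrivial_mk_le {X : Type u} [TopologicalSpace X] [Nontrivial X]
    {κ : Cardinal.{u}} (hκ : ℵ₀ ≤ κ) (hd : density X ≤ κ) :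
    ∃ T : Set X, Dense T ∧ T.Nontrivial ∧ #T ≤ κ := by
  obtain ⟨a, b, hab⟩ := exists_pair_ne X
  obtain ⟨s, hs, hsd⟩ := exists_dense_mk_eq_density X
  refine ⟨insert a (insert b s), hs.mono ((subset_insert _ _).trans (subset_insert _ _)),
    ⟨a, mem_insert _ _, b, mem_insert_of_mem _ (mem_insert _ _), hab⟩, ?_⟩
  calc _ ≤ #s + 1 + 1 := mk_insert_le.trans (by gcongr; exact mk_insert_le)
    _ ≤ κ + 1 + 1 := by gcongr; exact hsd ▸ hd
    _ = κ := by rw [add_one_eq hκ, add_one_eq hκ]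

/-- If `X` is a space with more than one point and `κ` is an infinite
cardinal with `d(X) ≤ κ`, then there is a set `A ⊆ X^(2^κ)` with `|A| = κ`,
`A` κ-dense in `X^(2^κ)`, and every `x ∈ A` has finite range. -/
theorem stmt0 {X : Type u} [TopologicalSpace X] (hX : Nontrivial X)
    (κ : Cardinal.{u}) (hκ : ℵ₀ ≤ κ) (hd : density X ≤ κ) :
    ∃ A : Set (((2 : Cardinal.{u}) ^ κ).out → X),
      #A = κ ∧ KDense κ A ∧ ∀ x ∈ A, (Set.range x).Finite := by
  obtain ⟨T, hTd, hTnt, hTκ⟩ := exists_dense_nontrivial_mk_le hκ hd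
  have : Infinite κ.out := infinite_iff.mpr (by rwa [mk_out])
  obtain ⟨e⟩ : Nonempty (((2 : Cardinal.{u}) ^ κ).out ≃ (κ.out → Bool)) :=
    Cardinal.eq.mp (by simp)
  let h := (Homeomorph.piCongrLeft (Y := fun _ => X) e).symm
  have hA := kDense_finitaryMaps (J := κ.out) hTd hTnt
  rw [mk_out] at hA
  refine ⟨h '' finitaryMaps κ.out T, ?_, hA.image_homeomorph h, ?_⟩
  · rw [mk_image_eq h.injective]
    exact le_antisymm (mk_finitaryMaps_le hκ (mk_out κ).le hTκ) hA.le_mk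
  · rintro _ ⟨x, hx, rfl⟩
    rw [Homeomorph.piCongrLeft_symm_apply]
    exact (finite_range_of_mem_finitaryMaps hx).subset (range_comp_subset_range e x)
end

section
/- Let Q be a topological space with more than one point and let κ be an infinite cardinal with d(Q) ≤ κ. Then there exist a set A ⊆ Q^κ with |A| = κ and functions f_α : A → Q for all α < 2^κ such that the set {(x, (f_α(x))_{α<2^κ}) : x ∈ A} is κ-dense in the product space Q^κ × Q^(2^κ). -/
open Cardinal

namespace Stmt1Aux

open Set Classical

variable {K L Q : Type u}

noncomputable def restr (t : Finset K) (x : Set K) : {s : Finset K // s ∈ t.powerset} :=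
  ⟨Finset.filter (· ∈ x) t,
    Finset.mem_powerset.2 (Finset.filter_subset _ _)⟩

lemma mem_restr {t : Finset K} {x : Set K} {i : K} :
    i ∈ (restr t x).1 ↔ i ∈ t ∧ i ∈ x := Finset.mem_filter

lemma restr_congr {t : Finset K} {x y : Set K} (h : ∀ i ∈ t, (i ∈ x ↔ i ∈ y)) :
    restr t x = restr t y :=
  Subtype.ext (Finset.ext fun i => by
    rw [mem_restr, mem_restr]
    exact and_congr_right (h i))

noncomputable def codeFun (e₁ : K → Set K) (e₂ : L → Set K)
    (c : Σ t : Finset K, ({s : Finset K // s ∈ t.powerset} → Q)) : (K → Q) × (L → Q) :=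
  (fun k => c.2 (restr c.1 (e₁ k)), fun l => c.2 (restr c.1 (e₂ l)))

noncomputable def denCode (t₁ : Finset K) (P : Finset (Set K)) (val : Set K → Q)
    (β : Finset K) (q₀ q₁ : Q) (k : K) :
    Σ t : Finset K, ({s : Finset K // s ∈ t.powerset} → Q) :=
  ⟨insert k t₁, fun b =>
    if h : ∃ z, z ∈ P ∧ (b : Finset K) ∩ t₁ = (restr t₁ z).1 then val h.choose
    else if (b : Finset K) ∩ t₁ = β then (if k ∈ (b : Finset K) then q₁ else q₀) else q₀⟩

lemma restr_insert_inter (t₁ : Finset K) (k : K) (x : Set K) :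
    ((restr (insert k t₁) x).1 : Finset K) ∩ t₁ = (restr t₁ x).1 := by
  ext i
  simp only [Finset.mem_inter, mem_restr, Finset.mem_insert]
  tauto

lemma denCode_snd_mem {t₁ : Finset K} {P : Finset (Set K)} {val : Set K → Q} {β : Finset K}
    {q₀ q₁ : Q} {k : K} {T : Set Q} (hval : ∀ z, val z ∈ T) (h₀ : q₀ ∈ T) (h₁ : q₁ ∈ T)
    (b : {s : Finset K // s ∈ (denCode t₁ P val β q₀ q₁ k).1.powerset}) :
    (denCode t₁ P val β q₀ q₁ k).2 b ∈ T := by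
  simp only [denCode]
  split
  · exact hval _
  · split
    · split <;> assumption
    · exact h₀

lemma denCode_eval_match {t₁ : Finset K} {P : Finset (Set K)} {val : Set K → Q} {β : Finset K}
    {q₀ q₁ : Q} {k : K} {x z : Set K}
    (hsep : ∀ z₁ ∈ P, ∀ z₂ ∈ P, restr t₁ z₁ = restr t₁ z₂ → z₁ = z₂)
    (hz : z ∈ P) (hm : restr t₁ x = restr t₁ z) :
    (denCode t₁ P val β q₀ q₁ k).2 (restr (insert k t₁) x) = val z := by
  have hb : ((restr (insert k t₁) x).1 : Finset K) ∩ t₁ = (restr t₁ z).1 := by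
    rw [restr_insert_inter]
    exact congrArg Subtype.val hm
  have h : ∃ z', z' ∈ P ∧ ((restr (insert k t₁) x).1 : Finset K) ∩ t₁ = (restr t₁ z').1 :=
    ⟨z, hz, hb⟩
  simp only [denCode]
  rw [dif_pos h]
  obtain ⟨hc1, hc2⟩ := h.choose_spec
  have heq : restr t₁ h.choose = restr t₁ z := Subtype.ext (by rw [← hc2, hb])
  exact congrArg val (hsep _ hc1 _ hz heq)

lemma denCode_eval_beta {t₁ : Finset K} {P : Finset (Set K)} {val : Set K → Q} {β : Finset K}
    {q₀ q₁ : Q} {k : K} {x : Set K} (hk : k ∉ t₁)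
    (hβ : ∀ z ∈ P, (restr t₁ z).1 ≠ β) (hx : (restr t₁ x).1 = β) :
    (denCode t₁ P val β q₀ q₁ k).2 (restr (insert k t₁) x)
      = if k ∈ x then q₁ else q₀ := by
  have h2 : ((restr (insert k t₁) x).1 : Finset K) ∩ t₁ = β := by
    rw [restr_insert_inter, hx]
  have h1 : ¬ ∃ z, z ∈ P ∧ ((restr (insert k t₁) x).1 : Finset K) ∩ t₁ = (restr t₁ z).1 := by
    rintro ⟨z, hz, hzz⟩
    exact hβ z hz (by rw [← hzz, restr_insert_inter, hx])
  have hmemk : k ∈ (restr (insert k t₁) x).1 ↔ k ∈ x := by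
    rw [mem_restr]
    simp
  simp only [denCode]
  rw [dif_neg h1, if_pos h2]
  by_cases hkx : k ∈ x
  · rw [if_pos (hmemk.2 hkx), if_pos hkx]
  · rw [if_neg (fun h => hkx (hmemk.1 h)), if_neg hkx]

lemma exists_sep (P : Finset (Set K)) :
    ∃ t₀ : Finset K, ∀ x ∈ P, ∀ y ∈ P, (∀ i ∈ t₀, (i ∈ x ↔ i ∈ y)) → x = y := by
  refine ⟨P.sup (fun x => P.sup (fun y =>
    if h : ∃ i, ¬(i ∈ x ↔ i ∈ y) then {h.choose} else ∅)), ?_⟩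
  intro x hx y hy hagree
  by_contra hne
  have h : ∃ i, ¬(i ∈ x ↔ i ∈ y) := by
    by_contra h'
    push_neg at h'
    exact hne (Set.ext h')
  refine h.choose_spec (hagree h.choose ?_)
  have h1 : (if h' : ∃ i, ¬(i ∈ x ↔ i ∈ y) then ({h'.choose} : Finset K) else ∅)
      ≤ P.sup (fun y => if h' : ∃ i, ¬(i ∈ x ↔ i ∈ y) then ({h'.choose} : Finset K) else ∅) :=
    Finset.le_sup (f := fun y => if h' : ∃ i, ¬(i ∈ x ↔ i ∈ y) then ({h'.choose} : Finset K) else ∅) hy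
  have h2 : P.sup (fun y => if h' : ∃ i, ¬(i ∈ x ↔ i ∈ y) then ({h'.choose} : Finset K) else ∅)
      ≤ P.sup (fun x => P.sup (fun y =>
        if h : ∃ i, ¬(i ∈ x ↔ i ∈ y) then ({h.choose} : Finset K) else ∅)) :=
    Finset.le_sup (f := fun x => P.sup (fun y => if h : ∃ i, ¬(i ∈ x ↔ i ∈ y) then ({h.choose} : Finset K) else ∅)) hx
  apply h2
  apply h1
  rw [dif_pos h]
  exact Finset.mem_singleton_self _

end Stmt1Aux

namespace Stmt1Aux

open Set Classical

theorem main {Q : Type u} [TopologicalSpace Q] (hQ : Nontrivial Q)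
    (κ : Cardinal.{u}) (hκ : ℵ₀ ≤ κ) (hd : density Q ≤ κ)
    (K L : Type u) (hK : #K = κ) (hL : #L = 2 ^ κ) :
    ∃ (A : Set (K → Q)) (f : L → ↥A → Q), #A = κ ∧
      KDense κ {p : (K → Q) × (L → Q) | ∃ x : A, p = (↑x, fun α => f α x)} := by
  obtain ⟨q₀, q₁, hq01⟩ := exists_pair_ne Q
  have hNQ : Nonempty Q := ⟨q₀⟩
  have hKinf : Infinite K := Cardinal.infinite_iff.2 (by rw [hK]; exact hκ)
  -- a dense set of size ≤ κ
  have hne : {c : Cardinal.{u} | ∃ s : Set Q, Dense s ∧ #s = c}.Nonempty :=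
    ⟨#(Set.univ : Set Q), Set.univ, dense_univ, rfl⟩
  have hmem : ∃ s : Set Q, Dense s ∧ #s = density Q := csInf_mem hne
  obtain ⟨S, hSdense, hScard⟩ := hmem
  have hS : #S ≤ κ := le_trans (le_of_eq hScard) hd
  set T : Set Q := S ∪ {q₀, q₁} with hT
  have hq₀T : q₀ ∈ T := Set.mem_union_right _ (by simp)
  have hq₁T : q₁ ∈ T := Set.mem_union_right _ (by simp)
  have hST : S ⊆ T := Set.subset_union_left
  have hTcard : #T ≤ κ := by
    calc #T ≤ #S + #({q₀, q₁} : Set Q) := Cardinal.mk_union_le _ _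
      _ ≤ κ + κ := add_le_add hS
          (le_trans (le_of_lt (((Set.finite_singleton q₁).insert q₀).lt_aleph0)) hκ)
      _ = κ := Cardinal.add_eq_self hκ
  -- e₁ : K → Set K hitting all "finite patterns"
  obtain ⟨eqv⟩ : Nonempty (K ≃ Finset K) := Cardinal.eq.1 (Cardinal.mk_finset_of_infinite K).symm
  set e₁ : K → Set K := fun k => ((eqv k : Finset K) : Set K) with he₁
  have he₁inj : Function.Injective e₁ := fun a b h => eqv.injective (Finset.coe_injective h)
  have hpat : ∀ (u : Finset K) (x : Set K), ∃ k₀, ∀ i ∈ u, (i ∈ e₁ k₀ ↔ i ∈ x) := by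
    intro u x
    refine ⟨eqv.symm (u.filter (· ∈ x)), fun i hi => ?_⟩
    simp only [he₁, Equiv.apply_symm_apply, Finset.coe_filter, Set.mem_setOf_eq]
    exact ⟨fun h => h.2, fun h => ⟨hi, h⟩⟩
  -- e₂ : L → Set K injective, avoiding range of e₁
  have hRle : #(Set.range e₁) ≤ κ := le_trans Cardinal.mk_range_le (le_of_eq hK)
  have hSetK : #(Set K) = 2 ^ κ := by rw [Cardinal.mk_set, hK]
  have hcompl : (2 : Cardinal) ^ κ ≤ #((Set.range e₁)ᶜ : Set (Set K)) := by
    by_contra hlt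
    push_neg at hlt
    have hsum := Cardinal.mk_sum_compl (Set.range e₁)
    rw [hSetK] at hsum
    have h2 : #(Set.range e₁) + #((Set.range e₁)ᶜ : Set (Set K)) < 2 ^ κ :=
      Cardinal.add_lt_of_lt (le_trans hκ (le_of_lt (Cardinal.cantor κ)))
        (lt_of_le_of_lt hRle (Cardinal.cantor κ)) hlt
    exact absurd hsum (ne_of_lt h2)
  obtain ⟨emb⟩ : Nonempty (L ↪ ((Set.range e₁)ᶜ : Set (Set K))) :=
    (Cardinal.le_def _ _).1 (by rw [hL]; exact hcompl)
  set e₂ : L → Set K := fun l => (emb l).1 with he₂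
  have he₂inj : Function.Injective e₂ := fun a b h => emb.injective (Subtype.ext h)
  have hdisj : ∀ l k, e₂ l ≠ e₁ k := fun l k h => (emb l).2 ⟨k, h.symm⟩
  -- the set D
  set D : Set ((K → Q) × (L → Q)) :=
    {p | ∃ c : Σ t : Finset K, ({s : Finset K // s ∈ t.powerset} → Q),
      (∀ b, c.2 b ∈ T) ∧ p = codeFun e₁ e₂ c} with hD
  -- graph property
  have hgraph : ∀ p ∈ D, ∀ p' ∈ D, p.1 = p'.1 → p = p' := by
    rintro p ⟨c, -, rfl⟩ p' ⟨c', -, rfl⟩ h1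
    have key : ∀ x : Set K, c.2 (restr c.1 x) = c'.2 (restr c'.1 x) := by
      intro x
      obtain ⟨k₀, hk₀⟩ := hpat (c.1 ∪ c'.1) x
      have e1 : restr c.1 (e₁ k₀) = restr c.1 x :=
        restr_congr (fun i hi => hk₀ i (Finset.mem_union_left _ hi))
      have e2 : restr c'.1 (e₁ k₀) = restr c'.1 x :=
        restr_congr (fun i hi => hk₀ i (Finset.mem_union_right _ hi))
      have hcf : c.2 (restr c.1 (e₁ k₀)) = c'.2 (restr c'.1 (e₁ k₀)) := congrFun h1 k₀
      rw [← e1, ← e2]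
      exact hcf
    exact Prod.ext h1 (funext fun l => key (e₂ l))
  -- κ-density of D
  have hKD : KDense κ D := by
    intro U hU hUne
    obtain ⟨p, hp⟩ := hUne
    obtain ⟨u, v, hu, hv, hpu, hpv, huv⟩ := isOpen_prod_iff.1 hU p.1 p.2 (by simpa using hp)
    obtain ⟨F₁, V, hV, hpiV⟩ := isOpen_pi_iff.1 hu p.1 hpu
    obtain ⟨F₂, W, hW, hpiW⟩ := isOpen_pi_iff.1 hv p.2 hpv
    -- choose approximating values
    have hsv : ∀ i : K, ∃ s : Q, s ∈ T ∧ (i ∈ F₁ → s ∈ V i) := by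
      intro i
      by_cases hi : i ∈ F₁
      · obtain ⟨s, hsV, hsS⟩ :=
          hSdense.inter_open_nonempty (V i) (hV i hi).1 ⟨p.1 i, (hV i hi).2⟩
        exact ⟨s, hST hsS, fun _ => hsV⟩
      · exact ⟨q₀, hq₀T, fun h => absurd h hi⟩
    choose sv hsvT hsvV using hsv
    have hsw : ∀ j : L, ∃ s : Q, s ∈ T ∧ (j ∈ F₂ → s ∈ W j) := by
      intro j
      by_cases hj : j ∈ F₂
      · obtain ⟨s, hsW, hsS⟩ :=
          hSdense.inter_open_nonempty (W j) (hW j hj).1 ⟨p.2 j, (hW j hj).2⟩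
        exact ⟨s, hST hsS, fun _ => hsW⟩
      · exact ⟨q₀, hq₀T, fun h => absurd h hj⟩
    choose sw hswT hswV using hsw
    -- the value function
    obtain ⟨val, hvalT, hval₁, hval₂⟩ :
        ∃ val : Set K → Q, (∀ z, val z ∈ T) ∧ (∀ i ∈ F₁, val (e₁ i) = sv i) ∧
          (∀ j ∈ F₂, val (e₂ j) = sw j) := by
      refine ⟨fun z =>
        if h2 : ∃ i, i ∈ F₁ ∧ z = e₁ i then sv h2.choose
        else if h3 : ∃ j, j ∈ F₂ ∧ z = e₂ j then sw h3.choose else q₀, ?_, ?_, ?_⟩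
      · intro z
        dsimp only
        split
        · exact hsvT _
        · split
          · exact hswT _
          · exact hq₀T
      · intro i hi
        have h2 : ∃ i', i' ∈ F₁ ∧ e₁ i = e₁ i' := ⟨i, hi, rfl⟩
        dsimp only
        rw [dif_pos h2]
        obtain ⟨-, hc2⟩ := h2.choose_spec
        exact congrArg sv (he₁inj hc2).symm
      · intro j hj
        have h2 : ¬ ∃ i, i ∈ F₁ ∧ e₂ j = e₁ i := by
          rintro ⟨i, -, hji⟩
          exact hdisj j i hji
        have h3 : ∃ j', j' ∈ F₂ ∧ e₂ j = e₂ j' := ⟨j, hj, rfl⟩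
        dsimp only
        rw [dif_neg h2, dif_pos h3]
        obtain ⟨-, hc2⟩ := h3.choose_spec
        exact congrArg sw (he₂inj hc2).symm
    -- the finite data
    set P : Finset (Set K) := F₁.image e₁ ∪ F₂.image e₂ with hP
    obtain ⟨t₀, ht₀⟩ := exists_sep P
    obtain ⟨t₁, ht₀₁, ht₁card⟩ :=
      Infinite.exists_superset_card_eq t₀ (t₀.card + P.card) (by omega)
    have hsep : ∀ z₁ ∈ P, ∀ z₂ ∈ P, restr t₁ z₁ = restr t₁ z₂ → z₁ = z₂ := by
      intro z₁ h₁ z₂ h₂ h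
      refine ht₀ z₁ h₁ z₂ h₂ fun i hi => ?_
      have hit₁ : i ∈ t₁ := ht₀₁ hi
      constructor
      · intro hm
        have hmem : i ∈ (restr t₁ z₁).1 := mem_restr.2 ⟨hit₁, hm⟩
        rw [h] at hmem
        exact (mem_restr.1 hmem).2
      · intro hm
        have hmem : i ∈ (restr t₁ z₂).1 := mem_restr.2 ⟨hit₁, hm⟩
        rw [← h] at hmem
        exact (mem_restr.1 hmem).2
    -- the avoided pattern β
    have hcard : (P.image fun z => (restr t₁ z).1).card < t₁.powerset.card := by
      rw [Finset.card_powerset]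
      calc (P.image fun z => (restr t₁ z).1).card ≤ P.card := Finset.card_image_le
        _ < 2 ^ P.card := Nat.lt_two_pow_self
        _ ≤ 2 ^ t₁.card := Nat.pow_le_pow_right (by norm_num) (by omega)
    obtain ⟨β, hβpow, hβim⟩ : ∃ β, β ∈ t₁.powerset ∧ β ∉ P.image fun z => (restr t₁ z).1 := by
      by_contra h
      push_neg at h
      exact absurd (Finset.card_le_card fun b hb => h b hb) (not_le.2 hcard)
    have hβt₁ : β ⊆ t₁ := Finset.mem_powerset.1 hβpow
    have hβne : ∀ z ∈ P, (restr t₁ z).1 ≠ β := fun z hz h =>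
      hβim (Finset.mem_image.2 ⟨z, hz, h⟩)
    -- membership of the codes in D ∩ U
    have hmemD : ∀ k, k ∉ t₁ →
        codeFun e₁ e₂ (denCode t₁ P val β q₀ q₁ k) ∈ D ∩ U := by
      intro k hk
      refine ⟨⟨denCode t₁ P val β q₀ q₁ k, fun b => denCode_snd_mem hvalT hq₀T hq₁T b, rfl⟩, ?_⟩
      apply huv
      refine Set.mem_prod.2 ⟨hpiV ?_, hpiW ?_⟩
      · intro i hi
        have hz : e₁ i ∈ P := Finset.mem_union_left _ (Finset.mem_image_of_mem _ hi)
        have heval : (codeFun e₁ e₂ (denCode t₁ P val β q₀ q₁ k)).1 i = val (e₁ i) :=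
          denCode_eval_match hsep hz rfl
        rw [heval, hval₁ i hi]
        exact hsvV i hi
      · intro j hj
        have hz : e₂ j ∈ P := Finset.mem_union_right _ (Finset.mem_image_of_mem _ hj)
        have heval : (codeFun e₁ e₂ (denCode t₁ P val β q₀ q₁ k)).2 j = val (e₂ j) :=
          denCode_eval_match hsep hz rfl
        rw [heval, hval₂ j hj]
        exact hswV j hj
    -- distinctness of the codes
    have hdist : ∀ k, k ∉ t₁ → ∀ k', k' ∉ t₁ → k ≠ k' →
        codeFun e₁ e₂ (denCode t₁ P val β q₀ q₁ k) ≠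
          codeFun e₁ e₂ (denCode t₁ P val β q₀ q₁ k') := by
      intro k hk k' hk' hkk' heq
      obtain ⟨k₀, hk₀⟩ := hpat (insert k (insert k' t₁)) ((β : Set K) ∪ {k})
      have hxk : k ∈ e₁ k₀ :=
        (hk₀ k (Finset.mem_insert_self _ _)).2 (Set.mem_union_right _ rfl)
      have hxk' : k' ∉ e₁ k₀ := by
        intro h
        rcases (hk₀ k' (by simp)).1 h with h' | h'
        · exact hk' (hβt₁ (Finset.mem_coe.1 h'))
        · exact hkk' (Set.mem_singleton_iff.1 h').symm
      have hrx : (restr t₁ (e₁ k₀)).1 = β := by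
        ext i
        rw [mem_restr]
        constructor
        · rintro ⟨hit, hix⟩
          rcases (hk₀ i (by simp [hit])).1 hix with h' | h'
          · exact Finset.mem_coe.1 h'
          · exact absurd hit (by rw [Set.mem_singleton_iff.1 h']; exact hk)
        · intro hib
          exact ⟨hβt₁ hib,
            (hk₀ i (by simp [hβt₁ hib])).2 (Set.mem_union_left _ (Finset.mem_coe.2 hib))⟩
      have h1 : (codeFun e₁ e₂ (denCode t₁ P val β q₀ q₁ k)).1 k₀ = q₁ := by
        have := denCode_eval_beta (t₁ := t₁) (P := P) (val := val) (q₀ := q₀) (q₁ := q₁)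
          (k := k) hk hβne hrx
        rw [show (codeFun e₁ e₂ (denCode t₁ P val β q₀ q₁ k)).1 k₀
            = (denCode t₁ P val β q₀ q₁ k).2 (restr (insert k t₁) (e₁ k₀)) from rfl, this,
          if_pos hxk]
      have h2 : (codeFun e₁ e₂ (denCode t₁ P val β q₀ q₁ k')).1 k₀ = q₀ := by
        have := denCode_eval_beta (t₁ := t₁) (P := P) (val := val) (q₀ := q₀) (q₁ := q₁)
          (k := k') hk' hβne hrx
        rw [show (codeFun e₁ e₂ (denCode t₁ P val β q₀ q₁ k')).1 k₀
            = (denCode t₁ P val β q₀ q₁ k').2 (restr (insert k' t₁) (e₁ k₀)) from rfl, this,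
          if_neg hxk']
      rw [heq] at h1
      exact hq01 (h2.symm.trans h1)
    -- conclude
    set φ : ((t₁ : Set K)ᶜ : Set K) → ↥(D ∩ U) := fun k =>
      ⟨codeFun e₁ e₂ (denCode t₁ P val β q₀ q₁ k.1),
        hmemD k.1 (fun h => k.2 (Finset.mem_coe.2 h))⟩ with hφ
    have hφinj : Function.Injective φ := by
      intro a b hab
      by_contra hne
      refine hdist a.1 (fun h => a.2 (Finset.mem_coe.2 h)) b.1
        (fun h => b.2 (Finset.mem_coe.2 h)) (fun h => hne (Subtype.ext h)) ?_
      exact congrArg Subtype.val hab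
    calc κ = #K := hK.symm
      _ = #(((t₁ : Set K)ᶜ : Set K)) := (Cardinal.mk_compl_of_infinite _
            (lt_of_lt_of_le t₁.finite_toSet.lt_aleph0 (by rw [hK]; exact hκ))).symm
      _ ≤ #↥(D ∩ U) := Cardinal.mk_le_of_injective hφinj
  -- cardinality of D
  have hterm : ∀ t : Finset K, #({s : Finset K // s ∈ t.powerset} → ↥T) ≤ κ := by
    intro t
    calc #({s : Finset K // s ∈ t.powerset} → ↥T)
        = #↥T ^ #{s : Finset K // s ∈ t.powerset} := (Cardinal.power_def _ _).symm
      _ ≤ κ ^ #{s : Finset K // s ∈ t.powerset} := Cardinal.power_le_power_right hTcard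
      _ ≤ κ := Cardinal.pow_le hκ (Cardinal.lt_aleph0_of_finite _)
  have hDle : #D ≤ κ := by
    have hsub : D ⊆ Set.range (fun c : Σ t : Finset K, ({s : Finset K // s ∈ t.powerset} → ↥T) =>
        codeFun e₁ e₂ ⟨c.1, fun b => ((c.2 b : Q))⟩) := by
      rintro pp ⟨c, hcT, rfl⟩
      exact ⟨⟨c.1, fun b => ⟨c.2 b, hcT b⟩⟩, rfl⟩
    calc #D ≤ #(Set.range (fun c : Σ t : Finset K, ({s : Finset K // s ∈ t.powerset} → ↥T) =>
            codeFun e₁ e₂ ⟨c.1, fun b => ((c.2 b : Q))⟩)) := Cardinal.mk_le_mk_of_subset hsub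
      _ ≤ #(Σ t : Finset K, ({s : Finset K // s ∈ t.powerset} → ↥T)) := Cardinal.mk_range_le
      _ = Cardinal.sum (fun t : Finset K => #({s : Finset K // s ∈ t.powerset} → ↥T)) :=
          Cardinal.mk_sigma _
      _ ≤ Cardinal.sum (fun _ : Finset K => κ) := Cardinal.sum_le_sum _ _ hterm
      _ = #(Finset K) * κ := Cardinal.sum_const' _ _
      _ = κ * κ := by rw [Cardinal.mk_finset_of_infinite, hK]
      _ = κ := Cardinal.mul_eq_self hκ
  have hDκ : #D = κ := by
    refine le_antisymm hDle ?_
    have := hKD Set.univ isOpen_univ Set.univ_nonempty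
    rwa [Set.inter_univ] at this
  -- assemble A and f
  have hAD : ∀ x : ↥(Prod.fst '' D), ∃ pp, pp ∈ D ∧ pp.1 = ↑x := fun x =>
    (Set.mem_image _ _ _).1 x.2
  choose sel hselD hsel1 using hAD
  refine ⟨Prod.fst '' D, fun l x => (sel x).2 l, ?_, ?_⟩
  · rw [Cardinal.mk_image_eq_of_injOn _ _ (fun pp hp qq hq h => hgraph pp hp qq hq h), hDκ]
  · have hset : {pp : (K → Q) × (L → Q) |
        ∃ x : ↥(Prod.fst '' D), pp = (↑x, fun α => (sel x).2 α)} = D := by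
      ext pp
      constructor
      · rintro ⟨x, rfl⟩
        have hx : ((x : K → Q), fun α => (sel x).2 α) = sel x :=
          Prod.ext (hsel1 x).symm rfl
        rw [hx]
        exact hselD x
      · intro hpp
        refine ⟨⟨pp.1, Set.mem_image_of_mem _ hpp⟩, ?_⟩
        have hmem := Set.mem_image_of_mem Prod.fst hpp
        have hEq : sel ⟨pp.1, hmem⟩ = pp :=
          hgraph _ (hselD ⟨pp.1, hmem⟩) pp hpp (hsel1 ⟨pp.1, hmem⟩)
        calc pp = ((pp.1 : K → Q), pp.2) := rfl
          _ = (pp.1, fun α => (sel ⟨pp.1, hmem⟩).2 α) := by rw [hEq]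
    show KDense κ {pp : (K → Q) × (L → Q) |
        ∃ x : ↥(Prod.fst '' D), pp = (↑x, fun α => (sel x).2 α)}
    rw [hset]
    exact hKD

end Stmt1Aux

/-- If `Q` is a space with more than one point and `κ` is an infinite
cardinal with `d(Q) ≤ κ`, then there are `A ⊆ Q^κ` with `|A| = κ` and functions
`f_α : A → Q` for `α < 2^κ` such that the graph set
`{(x, (f_α(x))_α) : x ∈ A}` is κ-dense in `Q^κ × Q^(2^κ)`. -/
theorem stmt1 {Q : Type u} [TopologicalSpace Q] (hQ : Nontrivial Q)
    (κ : Cardinal.{u}) (hκ : ℵ₀ ≤ κ) (hd : density Q ≤ κ) :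
    ∃ (A : Set (κ.out → Q)) (f : ((2 : Cardinal.{u}) ^ κ).out → ↥A → Q),
      #A = κ ∧
      KDense κ {p : (κ.out → Q) × (((2 : Cardinal.{u}) ^ κ).out → Q) |
        ∃ x : A, p = (↑x, fun α => f α x)} :=
  Stmt1Aux.main hQ κ hκ hd κ.out ((2 : Cardinal.{u}) ^ κ).out (Cardinal.mk_out κ)
    (Cardinal.mk_out _)
end

section
/- Let X be a T1 topological space such that every Δ(X)-dense subset of X is open. Then every dense subset of X is open; in particular, if X is crowded then X is submaximal. -/
open Cardinal

/-- The dispersion character of a space: the smallest cardinality of a nonempty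
open subset. -/
noncomputable def dispersion (X : Type u) [TopologicalSpace X] : Cardinal.{u} :=
  sInf {c : Cardinal.{u} | ∃ U : Set X, IsOpen U ∧ U.Nonempty ∧ #U = c}

/-- If `X` is a T1 space in which every `Δ(X)`-dense subset is open,
then every dense subset of `X` is open (in particular, if `X` is crowded,
then `X` is submaximal). -/
theorem stmt2 {X : Type u} [TopologicalSpace X] [T1Space X]
    (h : ∀ A : Set X, KDense (dispersion X) A → IsOpen A) :
    ∀ D : Set X, Dense D → IsOpen D := by
  intro D hD
  apply h
  intro U hU hUne
  by_contra hlt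
  push_neg at hlt
  set κ := dispersion X with hκ
  set S := D ∩ U with hS
  have hdisp : ∀ V : Set X, IsOpen V → V.Nonempty → κ ≤ #V := fun V hV hVne =>
    csInf_le' ⟨V, hV, hVne, rfl⟩
  have hSclosed : IsClosed S := by
    by_cases hfin : S.Finite
    · exact hfin.isClosed
    · have hinfS : ℵ₀ ≤ #S := by
        rw [Cardinal.aleph0_le_mk_iff, Set.infinite_coe_iff]
        exact hfin
      have hκinf : ℵ₀ ≤ κ := le_of_lt (lt_of_le_of_lt hinfS hlt)
      have hopen : IsOpen Sᶜ := by
        apply h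
        intro V hV hVne
        have h1 : κ ≤ #V := hdisp V hV hVne
        have h2 : #V ≤ #(↥(V ∩ S)) + #(↥(V \ S)) := by
          calc #V = #(↥(V ∩ S ∪ V \ S)) := by rw [Set.inter_union_diff]
            _ ≤ _ := Cardinal.mk_union_le _ _
        have h3 : #(↥(V ∩ S)) < κ :=
          lt_of_le_of_lt (Cardinal.mk_le_mk_of_subset Set.inter_subset_right) hlt
        by_contra hc
        push_neg at hc
        have h4 : #(↥(V \ S)) < κ := by
          refine lt_of_le_of_lt (Cardinal.mk_le_mk_of_subset ?_) hc
          intro x hx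
          exact ⟨hx.2, hx.1⟩
        exact absurd h1 (not_le.2 (lt_of_le_of_lt h2 (Cardinal.add_lt_of_lt hκinf h3 h4)))
      exact isOpen_compl_iff.mp hopen
  have hUsub : U ⊆ S := by
    have h5 : U ∩ closure D ⊆ closure (U ∩ D) := hU.inter_closure
    rw [hD.closure_eq, Set.inter_univ, Set.inter_comm, hSclosed.closure_eq] at h5
    exact h5
  have : κ ≤ #S := le_trans (hdisp U hU hUne) (Cardinal.mk_le_mk_of_subset hUsub)
  exact absurd this (not_le.2 hlt)
end

section
/- Let λ be a cardinal and let A ⊆ [0,1]^λ be dense in the product space [0,1]^λ. If B is any set with I^ω(A) ⊆ B ⊆ [0,1]^λ, then the subspace B is connected and locally connected. -/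
open Cardinal unitInterval

/-- The union of all (coordinatewise) line segments with endpoints in `A`. -/
def segUnion {ι : Type*} (A : Set (ι → I)) : Set (ι → I) :=
  {x | ∃ a ∈ A, ∃ b ∈ A, ∃ t ∈ Set.Icc (0 : ℝ) 1,
    ∀ i, (x i : ℝ) = (1 - t) * (a i : ℝ) + t * (b i : ℝ)}

/-- `I^ω(A) = ⋃ₙ I^n(A)` where `I^1(A)` is the union of segments with endpoints
in `A` and `I^{n+1}(A) = I^1(I^n(A))`. -/
def Iomega {ι : Type*} (A : Set (ι → I)) : Set (ι → I) :=
  ⋃ n : ℕ, segUnion^[n + 1] A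

namespace SegAux

variable {ι : Type*}

lemma comb_mem (a b : I) {t : ℝ} (ht : t ∈ Set.Icc (0 : ℝ) 1) :
    (1 - t) * (a : ℝ) + t * (b : ℝ) ∈ Set.Icc (0 : ℝ) 1 := by
  have := (convex_Icc (0:ℝ) 1) a.2 b.2 (sub_nonneg.mpr ht.2) ht.1 (by ring)
  simpa [smul_eq_mul] using this

/-- The segment between `a` and `b`. -/
def seg (a b : ι → I) : Set (ι → I) :=
  {x | ∃ t ∈ Set.Icc (0 : ℝ) 1, ∀ i, (x i : ℝ) = (1 - t) * (a i : ℝ) + t * (b i : ℝ)}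

lemma left_mem_seg (a b : ι → I) : a ∈ seg a b :=
  ⟨0, ⟨le_refl _, zero_le_one⟩, fun i => by ring⟩

lemma right_mem_seg (a b : ι → I) : b ∈ seg a b :=
  ⟨1, ⟨zero_le_one, le_refl _⟩, fun i => by ring⟩

lemma seg_subset {A : Set (ι → I)} {a b : ι → I} (ha : a ∈ A) (hb : b ∈ A) :
    seg a b ⊆ segUnion A := fun x ⟨t, ht, hx⟩ => ⟨a, ha, b, hb, t, ht, hx⟩

lemma self_subset_segUnion (A : Set (ι → I)) : A ⊆ segUnion A := fun a ha =>
  ⟨a, ha, a, ha, 0, ⟨le_refl _, zero_le_one⟩, fun i => by ring⟩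

/-- Parametrization of the segment. -/
noncomputable def segMap (a b : ι → I) (t : Set.Icc (0:ℝ) 1) : ι → I :=
  fun i => ⟨(1 - t.1) * (a i : ℝ) + t.1 * (b i : ℝ), comb_mem (a i) (b i) t.2⟩

lemma continuous_segMap (a b : ι → I) : Continuous (segMap a b) := by
  refine continuous_pi fun i => Continuous.subtype_mk ?_ _
  fun_prop

lemma seg_eq_range (a b : ι → I) : seg a b = Set.range (segMap a b) := by
  ext x
  constructor
  · rintro ⟨t, ht, hx⟩
    exact ⟨⟨t, ht⟩, funext fun i => Subtype.ext (hx i).symm⟩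
  · rintro ⟨t, rfl⟩
    exact ⟨t.1, t.2, fun i => rfl⟩

lemma isPreconnected_seg (a b : ι → I) : IsPreconnected (seg a b) := by
  rw [seg_eq_range]
  have : PreconnectedSpace (Set.Icc (0:ℝ) 1) := Subtype.preconnectedSpace isPreconnected_Icc
  exact isPreconnected_range (continuous_segMap a b)

lemma segUnion_mono {A B : Set (ι → I)} (h : A ⊆ B) : segUnion A ⊆ segUnion B := by
  rintro x ⟨a, ha, b, hb, t, ht, hx⟩
  exact ⟨a, h ha, b, h hb, t, ht, hx⟩

lemma iterate_subset_iomega (A : Set (ι → I)) (n : ℕ) : segUnion^[n + 1] A ⊆ Iomega A :=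
  Set.subset_iUnion (fun n => segUnion^[n + 1] A) n

lemma mem_iomega_of_mem {A : Set (ι → I)} {a : ι → I} (ha : a ∈ A) : a ∈ Iomega A :=
  iterate_subset_iomega A 0 (self_subset_segUnion A ha)

/-- Key connectivity lemma: `Iomega A` is preconnected. -/
lemma isPreconnected_iomega {A : Set (ι → I)} (hA : A.Nonempty) :
    IsPreconnected (Iomega A) := by
  obtain ⟨a0, ha0⟩ := hA
  refine isPreconnected_of_forall a0 ?_
  have key : ∀ n, ∀ y ∈ segUnion^[n + 1] A,
      ∃ t, t ⊆ Iomega A ∧ a0 ∈ t ∧ y ∈ t ∧ IsPreconnected t := by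
    intro n
    induction n with
    | zero =>
      intro y hy
      obtain ⟨a, ha, b, hb, t, ht, hx⟩ := hy
      refine ⟨seg a0 a ∪ seg a b, ?_, Or.inl (left_mem_seg a0 a),
        Or.inr ⟨t, ht, hx⟩, IsPreconnected.union a (right_mem_seg a0 a) (left_mem_seg a b)
          (isPreconnected_seg a0 a) (isPreconnected_seg a b)⟩
      exact Set.union_subset
        ((seg_subset ha0 ha).trans (iterate_subset_iomega A 0))
        ((seg_subset ha hb).trans (iterate_subset_iomega A 0))
    | succ n ih =>
      intro y hy
      rw [Function.iterate_succ_apply'] at hy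
      obtain ⟨p, hp, q, hq, t, ht, hx⟩ := hy
      obtain ⟨C, hCsub, ha0C, hpC, hCconn⟩ := ih p hp
      refine ⟨C ∪ seg p q, ?_, Or.inl ha0C, Or.inr ⟨t, ht, hx⟩,
        IsPreconnected.union p hpC (left_mem_seg p q) hCconn (isPreconnected_seg p q)⟩
      refine Set.union_subset hCsub ?_
      refine (seg_subset hp hq).trans ?_
      have : segUnion (segUnion^[n+1] A) = segUnion^[n + 2] A :=
        (Function.iterate_succ_apply' segUnion (n+1) A).symm
      rw [this]
      exact iterate_subset_iomega A (n + 1)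
  rintro y hy
  obtain ⟨_, ⟨n, rfl⟩, hyn⟩ := hy
  exact key n y hyn

/-- If `V` is closed under segments and contains `S`, it contains `Iomega S`. -/
lemma iomega_subset_of_convex {S V : Set (ι → I)} (hSV : S ⊆ V)
    (hV : segUnion V ⊆ V) : Iomega S ⊆ V := by
  have : ∀ n, segUnion^[n] S ⊆ V := by
    intro n
    induction n with
    | zero => exact hSV
    | succ n ih =>
      rw [Function.iterate_succ_apply']
      exact (segUnion_mono ih).trans hV
  exact Set.iUnion_subset fun n => this (n + 1)

lemma iomega_mono {S T : Set (ι → I)} (h : S ⊆ T) : Iomega S ⊆ Iomega T := by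
  refine Set.iUnion_subset fun n => ?_
  have : ∀ m, segUnion^[m] S ⊆ segUnion^[m] T := by
    intro m
    induction m with
    | zero => exact h
    | succ m ih =>
      rw [Function.iterate_succ_apply', Function.iterate_succ_apply']
      exact segUnion_mono ih
  exact (this (n+1)).trans (iterate_subset_iomega T n)

/-- Main "local" lemma: for `V` open, nonempty, closed under segments,
`V ∩ B` is preconnected. -/
lemma isPreconnected_inter {A B V : Set (ι → I)} (hA : Dense A) (hB : Iomega A ⊆ B)
    (hV : IsOpen V) (hVconv : segUnion V ⊆ V) (hne : V.Nonempty) :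
    IsPreconnected (V ∩ B) := by
  obtain ⟨a, haA, haV⟩ := hA.exists_mem_open hV hne
  have hAVne : (A ∩ V).Nonempty := ⟨a, haA, haV⟩
  have hC : IsPreconnected (Iomega (A ∩ V)) := isPreconnected_iomega hAVne
  refine hC.subset_closure ?_ ?_
  · exact Set.subset_inter
      (iomega_subset_of_convex Set.inter_subset_right hVconv)
      ((iomega_mono Set.inter_subset_left).trans hB)
  · intro x hx
    have h1 : V ⊆ closure (V ∩ A) := hA.open_subset_closure_inter hV
    refine (closure_mono ?_ (h1 hx.1) : _)
    intro y hy
    exact mem_iomega_of_mem ⟨hy.2, hy.1⟩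

end SegAux

open SegAux in
/-- if `A` is dense in the Tychonoff cube `[0,1]^λ` and
`I^ω(A) ⊆ B ⊆ [0,1]^λ`, then the subspace `B` is connected and
locally connected. -/
theorem stmt4 (lam : Cardinal.{u}) (A : Set (lam.out → I)) (hA : Dense A)
    (B : Set (lam.out → I)) (hB : Iomega A ⊆ B) :
    ConnectedSpace B ∧ LocallyConnectedSpace B := by
  have hAne : A.Nonempty := hA.nonempty
  obtain ⟨a0, ha0⟩ := hAne
  have ha0B : a0 ∈ B := hB (mem_iomega_of_mem ha0)
  have hDI : Dense (Iomega A) := hA.mono (fun a ha => mem_iomega_of_mem ha)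
  constructor
  · -- connectedness
    refine Subtype.connectedSpace ⟨⟨a0, ha0B⟩, ?_⟩
    refine (isPreconnected_iomega ⟨a0, ha0⟩).subset_closure hB ?_
    rw [hDI.closure_eq]
    exact Set.subset_univ B
  · -- local connectedness
    rw [locallyConnectedSpace_iff_connected_subsets]
    intro x U hU
    rw [nhds_induced] at hU
    obtain ⟨W, hW, hWU⟩ := hU
    obtain ⟨Wo, hWoW, hWoOpen, hxWo⟩ := mem_nhds_iff.mp hW
    obtain ⟨s, u, hu, hpi⟩ := isOpen_pi_iff.mp hWoOpen _ hxWo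
    -- shrink each factor to an open interval
    have hε : ∀ i : lam.out, ∃ ε : ℝ, 0 < ε ∧ (i ∈ s →
        Subtype.val ⁻¹' Set.Ioo (((x : lam.out → I) i : ℝ) - ε)
          (((x : lam.out → I) i : ℝ) + ε) ⊆ u i) := by
      intro i
      by_cases hi : i ∈ s
      · obtain ⟨hio, hxi⟩ := hu i hi
        obtain ⟨r, hr, hru⟩ := isOpen_induced_iff.mp hio
        obtain ⟨ε, hε, hball⟩ := Metric.isOpen_iff.mp hr _ (by
          rw [← hru] at hxi; exact hxi)
        refine ⟨ε, hε, fun _ => ?_⟩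
        intro y hy
        rw [← hru]
        apply hball
        rw [Real.ball_eq_Ioo]
        exact hy
      · exact ⟨1, one_pos, fun h => absurd h hi⟩
    choose ε hεpos hεsub using hε
    set V : Set (lam.out → I) := (s : Set lam.out).pi
      (fun i => Subtype.val ⁻¹' Set.Ioo (((x : lam.out → I) i : ℝ) - ε i)
        (((x : lam.out → I) i : ℝ) + ε i)) with hVdef
    have hVopen : IsOpen V :=
      isOpen_set_pi s.finite_toSet
        (fun i _ => isOpen_Ioo.preimage continuous_subtype_val)
    have hxV : (x : lam.out → I) ∈ V := by
      intro i hi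
      exact ⟨by linarith [hεpos i], by linarith [hεpos i]⟩
    have hVW : V ⊆ W := by
      refine (fun y hy => hWoW (hpi ?_))
      intro i hi
      exact hεsub i hi (hy i hi)
    have hVconv : segUnion V ⊆ V := by
      rintro y ⟨a, ha, b, hb, t, ht, hy⟩ i hi
      have hai := ha i hi
      have hbi := hb i hi
      have := (convex_Ioo (((x : lam.out → I) i : ℝ) - ε i)
        (((x : lam.out → I) i : ℝ) + ε i)) hai hbi
        (sub_nonneg.mpr ht.2) ht.1 (by ring)
      simpa [smul_eq_mul, ← hy i] using this
    have hVB : IsPreconnected (V ∩ B) :=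
      isPreconnected_inter hA hB hVopen hVconv ⟨_, hxV⟩
    refine ⟨Subtype.val ⁻¹' V, ?_, ?_, ?_⟩
    · rw [nhds_induced]
      exact Filter.preimage_mem_comap (hVopen.mem_nhds hxV)
    · rw [← Topology.IsInducing.subtypeVal.isPreconnected_image]
      rw [Subtype.image_preimage_coe]
      rwa [Set.inter_comm]
    · exact fun y hy => hWU (hVW hy)
end

section
/- Let λ be a cardinal and let A ⊆ [0,1]^λ. Then there exists a set B with A ⊆ B ⊆ [0,1]^λ such that the subspace B is countably compact and |B| ≤ |A|^ω (cardinal exponentiation). -/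
open Cardinal unitInterval Filter Set

universe u

/-- A space is countably compact if every countable open cover has a finite
subcover. -/
def CountablyCompactSpaceByCovers (X : Type*) [TopologicalSpace X] : Prop :=
  ∀ 𝒰 : Set (Set X), 𝒰.Countable → (∀ U ∈ 𝒰, IsOpen U) → ⋃₀ 𝒰 = Set.univ →
    ∃ 𝒱 ⊆ 𝒰, 𝒱.Finite ∧ ⋃₀ 𝒱 = Set.univ

/-- If every sequence in `B` has a cluster point in `B`, then `B` is countably
compact as a subspace. -/
theorem countablyCompact_of_clusterPt {X : Type*} [TopologicalSpace X] {B : Set X}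
    (h : ∀ u : ℕ → X, (∀ n, u n ∈ B) → ∃ x ∈ B, MapClusterPt x atTop u) :
    CountablyCompactSpaceByCovers B := by
  intro 𝒰 hctbl hopen hcov
  by_contra hcon
  push_neg at hcon
  rcases 𝒰.eq_empty_or_nonempty with rfl | hne
  · exact hcon ∅ (by simp) finite_empty (by simpa using hcov)
  obtain ⟨e, rfl⟩ := hctbl.exists_eq_range hne
  have hx : ∀ n : ℕ, ∃ z : B, z ∉ ⋃ k ≤ n, e k := by
    intro n
    have h1 := hcon (e '' Iic n) (image_subset_range _ _) ((finite_Iic n).image _)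
    rw [sUnion_image] at h1
    rcases (ne_univ_iff_exists_notMem _).1 h1 with ⟨z, hz⟩
    exact ⟨z, by simpa using hz⟩
  choose x hxn using hx
  obtain ⟨y, hyB, hy⟩ := h (fun n => (x n : X)) (fun n => (x n).2)
  have hmem : (⟨y, hyB⟩ : B) ∈ ⋃₀ range e := by rw [hcov]; trivial
  rcases hmem with ⟨U, ⟨m, rfl⟩, hyU⟩
  obtain ⟨V, hVopen, hVeq⟩ := isOpen_induced_iff.1 (hopen _ (mem_range_self m))
  have hVy : V ∈ nhds y := hVopen.mem_nhds (by rw [← hVeq] at hyU; exact hyU)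
  have hfreq := (mapClusterPt_iff_frequently.1 hy) V hVy
  obtain ⟨n, hnV, hnm⟩ := (hfreq.and_eventually (eventually_ge_atTop m)).exists
  exact hxn n (mem_iUnion₂.2 ⟨m, hnm, by rw [← hVeq]; exact hnV⟩)

/-- Transfinite iteration adding chosen cluster points of sequences. -/
noncomputable def stage {X : Type u} {ι : Type u} [LinearOrder ι] [WellFoundedLT ι]
    (A : Set X) (f : (ℕ → X) → X) : ι → Set X :=
  (wellFounded_lt (α := ι)).fix fun i rec =>
    A ∪ f '' {u | ∀ n : ℕ, ∃ j, ∃ h : j < i, u n ∈ rec j h}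

theorem stage_eq {X : Type u} {ι : Type u} [LinearOrder ι] [WellFoundedLT ι]
    (A : Set X) (f : (ℕ → X) → X) (i : ι) :
    stage A f i = A ∪ f '' {u | ∀ n : ℕ, ∃ j, j < i ∧ u n ∈ stage A f j} := by
  rw [stage, WellFounded.fix_eq]
  simp only [exists_prop]

/-- every `A ⊆ [0,1]^λ` is contained in a countably compact
subspace `B ⊆ [0,1]^λ` with `|B| ≤ |A|^ω`. -/
theorem stmt5 (lam : Cardinal.{u}) (A : Set (lam.out → I)) :
    ∃ B : Set (lam.out → I),
      A ⊆ B ∧ CountablyCompactSpaceByCovers B ∧ #B ≤ #A ^ (ℵ₀ : Cardinal.{u}) := by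
  by_cases hA : A.Subsingleton
  · -- a subsingleton set is trivially countably compact
    refine ⟨A, subset_rfl, countablyCompact_of_clusterPt ?_, self_le_power _ one_le_aleph0⟩
    intro u hu
    refine ⟨u 0, hu 0, ?_⟩
    have hconst : u = fun _ => u 0 := funext fun n => hA (hu n) (hu 0)
    show ClusterPt (u 0) (Filter.map u atTop)
    rw [hconst, Filter.map_const]
    exact (ClusterPt.of_le_nhds (pure_le_nhds _))
  · -- main case : `A` has at least two points
    rw [Set.not_subsingleton_iff] at hA
    have hAnt : Nontrivial A := hA.coe_sort
    have h2 : (2 : Cardinal) ≤ #A := two_le_iff.2 (by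
      obtain ⟨a, b, hab⟩ := hAnt; exact ⟨a, b, hab⟩)
    have hXne : Nonempty (lam.out → I) := ⟨(Classical.arbitrary A : A).1⟩
    set κ := #A ^ (ℵ₀ : Cardinal.{u}) with hκ
    have hcont : (2 : Cardinal.{u}) ^ (ℵ₀ : Cardinal.{u}) ≤ κ := power_le_power_right h2
    have hℵ₁κ : (aleph 1 : Cardinal.{u}) ≤ κ := by
      refine aleph_one_le_continuum.trans ?_
      rw [← two_power_aleph0]
      exact hcont
    have hℵ₀κ : (ℵ₀ : Cardinal.{u}) ≤ κ := (aleph0_lt_aleph_one.le).trans hℵ₁κ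
    have hκκ : κ ^ (ℵ₀ : Cardinal.{u}) = κ := by
      rw [hκ, ← power_mul, aleph0_mul_aleph0]
    have hAκ : #A ≤ κ := self_le_power _ one_le_aleph0
    -- choose cluster points
    have hcl : ∀ u : ℕ → (lam.out → I), ∃ x : (lam.out → I), MapClusterPt x atTop u := fun u =>
      exists_clusterPt_of_compactSpace (Filter.map u atTop)
    choose f hf using hcl
    have hιne : Nonempty (aleph 1 : Cardinal.{u}).ord.ToType :=
      Ordinal.toType_nonempty_iff_ne_zero.2 (by
        rw [Ne, Cardinal.ord_eq_zero]; exact (aleph_pos 1).ne')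
    set B := ⋃ i : (aleph 1 : Cardinal.{u}).ord.ToType, stage A f i with hB
    have hsub : A ⊆ B := by
      intro a ha
      exact mem_iUnion.2 ⟨Classical.arbitrary _, by rw [stage_eq]; exact Or.inl ha⟩
    have hclosed : ∀ u : ℕ → (lam.out → I), (∀ n, u n ∈ B) → f u ∈ B := by
      intro u hu
      choose g hg using fun n => mem_iUnion.1 (hu n)
      haveI hwo : IsWellOrder (aleph 1 : Cardinal.{u}).ord.ToType (· < ·) := isWellOrder_lt
      have hcard : #(range g) < Ordinal.cof (Ordinal.type ((· < ·) : (aleph 1 : Cardinal.{u}).ord.ToType → (aleph 1 : Cardinal.{u}).ord.ToType → Prop)) := by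
        rw [Ordinal.type_toType, isRegular_aleph_one.cof_eq]
        exact (mk_le_aleph0_iff.2 (countable_range g)).trans_lt aleph0_lt_aleph_one
      obtain ⟨i, hi⟩ := not_isCofinal_iff.1 (fun hc => (Order.cof_le hc).not_gt (by have h := hcard; simp only [Ordinal.cof_type] at h; exact h))
      refine mem_iUnion.2 ⟨i, ?_⟩
      rw [stage_eq]
      exact Or.inr ⟨u, fun n => ⟨g n, hi _ (mem_range_self n), hg n⟩, rfl⟩
    have hcc : CountablyCompactSpaceByCovers B :=
      countablyCompact_of_clusterPt fun u hu => ⟨f u, hclosed u hu, hf u⟩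
    -- cardinality bound
    have hstage : ∀ i : (aleph 1 : Cardinal.{u}).ord.ToType, #(stage A f i) ≤ κ := by
      intro i
      induction i using WellFoundedLT.induction with
      | _ i IH =>
        rw [stage_eq]
        refine (mk_union_le _ _).trans ?_
        have hS : #({u : ℕ → (lam.out → I) | ∀ n : ℕ, ∃ j, j < i ∧ u n ∈ stage A f j}) ≤ κ := by
          set T := ⋃ j : Set.Iio i, stage A f j.1 with hT
          have hTκ : #T ≤ κ := by
            refine (mk_iUnion_le_sum_mk).trans ?_
            refine (sum_le_sum _ (fun _ => κ) (fun j : Set.Iio i => IH j.1 j.2)).trans ?_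
            rw [sum_const']
            calc #(Set.Iio i) * κ ≤ (aleph 1) * κ := by
                  refine mul_le_mul_left ?_ κ
                  refine (mk_set_le _).trans ?_
                  rw [Cardinal.mk_toType, card_ord]
              _ ≤ κ * κ := mul_le_mul_left hℵ₁κ κ
              _ = κ := mul_eq_self hℵ₀κ
          have hinj : ∃ F : ({u : ℕ → (lam.out → I) | ∀ n : ℕ, ∃ j, j < i ∧ u n ∈ stage A f j}) → (ℕ → T),
              Function.Injective F := by
            refine ⟨fun u n => ⟨u.1 n, ?_⟩, ?_⟩
            · obtain ⟨j, hj, hm⟩ := u.2 n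
              exact mem_iUnion.2 ⟨⟨j, hj⟩, hm⟩
            · intro u v huv
              exact Subtype.ext (funext fun n => congrArg Subtype.val (congrFun huv n))
          obtain ⟨F, hF⟩ := hinj
          refine (mk_le_of_injective hF).trans ?_
          have e1 : (ℕ → T) ≃ (ULift.{u} ℕ → T) :=
            Equiv.arrowCongr Equiv.ulift.symm (Equiv.refl _)
          rw [mk_congr e1, ← power_def, mk_uLift, mk_nat, lift_aleph0]
          calc #T ^ (ℵ₀ : Cardinal.{u}) ≤ κ ^ (ℵ₀ : Cardinal.{u}) := power_le_power_right hTκ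
            _ = κ := hκκ
        calc #A + #(f '' {u : ℕ → (lam.out → I) | ∀ n : ℕ, ∃ j, j < i ∧ u n ∈ stage A f j})
            ≤ κ + κ := add_le_add hAκ (mk_image_le.trans hS)
          _ = κ := add_eq_self hℵ₀κ
    have hBκ : #B ≤ κ := by
      refine (mk_iUnion_le_sum_mk).trans ?_
      refine (sum_le_sum _ (fun _ => κ) (fun i => hstage i)).trans ?_
      rw [sum_const']
      calc #((aleph 1 : Cardinal.{u}).ord.ToType) * κ ≤ (aleph 1) * κ := by
            rw [Cardinal.mk_toType, card_ord]
        _ ≤ κ * κ := mul_le_mul_left hℵ₁κ κ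
        _ = κ := mul_eq_self hℵ₀κ
    exact ⟨B, hsub, hcc, hBκ⟩
end

section
/- Let X be a topological space, let λ be a cardinal with λ ≥ 1, and let a, b ∈ X^λ be stair-points. Then there exists a finite web 𝓔 in X^λ such that a, b ∈ ⋃𝓔. -/
open Cardinal

/-- A family `𝓔` of subsets of `ι → X` is a web if every member (with the
subspace topology) is homeomorphic to `X` and any two members are connected by
a finite chain of members in which consecutive members intersect. -/
def IsWeb {X : Type*} [TopologicalSpace X] {ι : Type*}
    (𝓔 : Set (Set (ι → X))) : Prop :=
  (∀ A ∈ 𝓔, Nonempty (↥A ≃ₜ X)) ∧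
  ∀ A ∈ 𝓔, ∀ B ∈ 𝓔, ∃ (n : ℕ) (C : Fin (n + 1) → Set (ι → X)),
    (∀ k, C k ∈ 𝓔) ∧ C 0 = A ∧ C (Fin.last n) = B ∧
    ∀ k : Fin n, (C k.castSucc ∩ C k.succ).Nonempty

theorem chain_web {X : Type*} [TopologicalSpace X] {ι : Type*}
    {m : ℕ} (E : ℕ → Set (ι → X))
    (hhomeo : ∀ j < m, Nonempty (↥(E j) ≃ₜ X))
    (hinter : ∀ j, j + 1 < m → (E j ∩ E (j + 1)).Nonempty) :
    IsWeb {S | ∃ j < m, S = E j} := by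
  constructor
  · rintro A ⟨j, hj, rfl⟩
    exact hhomeo j hj
  · rintro A ⟨i, hi, rfl⟩ B ⟨j, hj, rfl⟩
    rcases le_or_gt i j with hij | hij
    · refine ⟨j - i, fun k => E (i + k.val), ?_, ?_, ?_, ?_⟩
      · exact fun k => ⟨i + k.val, by have := k.isLt; omega, rfl⟩
      · simp
      · show E (i + (Fin.last (j - i)).val) = E j
        rw [show i + (Fin.last (j - i)).val = j by simp only [Fin.val_last]; omega]
      · intro k
        have hk := k.isLt
        have h1 : (i + (k.castSucc).val) = i + k.val := by simp
        have h2 : (i + (k.succ).val) = (i + k.val) + 1 := by simp [Fin.val_succ]; omega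
        show (E (i + (k.castSucc).val) ∩ E (i + (k.succ).val)).Nonempty
        rw [h1, h2]
        exact hinter _ (by omega)
    · refine ⟨i - j, fun k => E (i - k.val), ?_, ?_, ?_, ?_⟩
      · exact fun k => ⟨i - k.val, by have := k.isLt; omega, rfl⟩
      · simp
      · show E (i - (Fin.last (i - j)).val) = E j
        rw [show i - (Fin.last (i - j)).val = j by simp only [Fin.val_last]; omega]
      · intro k
        have hk := k.isLt
        have h1 : (i - (k.castSucc).val) = i - k.val := by simp
        have h2 : (i - (k.succ).val) = (i - k.val) - 1 := by simp [Fin.val_succ]; omega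
        show (E (i - (k.castSucc).val) ∩ E (i - (k.succ).val)).Nonempty
        rw [h1, h2]
        have ht : (i - k.val - 1) + 1 = i - k.val := by omega
        rw [Set.inter_comm, ← ht]
        exact hinter _ (by omega)

/-- for any two stair-points `a, b` of `X^λ` (points with finite
range) there is a finite web `𝓔` in `X^λ` with `a, b ∈ ⋃𝓔`. -/
theorem stmt7 {X : Type u} [TopologicalSpace X] (lam : Cardinal.{u})
    (hlam : 1 ≤ lam) (a b : lam.out → X)
    (ha : (Set.range a).Finite) (hb : (Set.range b).Finite) :
    ∃ 𝓔 : Set (Set (lam.out → X)),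
      𝓔.Finite ∧ IsWeb 𝓔 ∧ a ∈ ⋃₀ 𝓔 ∧ b ∈ ⋃₀ 𝓔 := by
  classical
  have hne : Nonempty lam.out := by
    rw [← Cardinal.mk_ne_zero_iff (α := lam.out)]
    rw [Cardinal.mk_out]
    exact fun h => by simp [h] at hlam
  set f : lam.out → X × X := fun α => (a α, b α) with hf
  have hfin : (Set.range f).Finite := by
    apply Set.Finite.subset (ha.prod hb)
    rintro _ ⟨α, rfl⟩
    exact ⟨⟨α, rfl⟩, ⟨α, rfl⟩⟩
  set s : Finset (X × X) := hfin.toFinset with hs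
  have hmem : ∀ α, f α ∈ s := fun α => by
    rw [hs, Set.Finite.mem_toFinset]; exact ⟨α, rfl⟩
  set e : ↥s ≃ Fin s.card := s.equivFin with he
  set m : ℕ := s.card with hmdef
  set idx : lam.out → ℕ := fun α => (e ⟨f α, hmem α⟩).val with hidxdef
  have hidx : ∀ α, idx α < m := fun α => (e ⟨f α, hmem α⟩).isLt
  have hm : 1 ≤ m := by
    obtain ⟨α⟩ := hne
    have := hidx α
    omega
  -- injectivity of idx w.r.t. f
  have hinj : ∀ α β, idx α = idx β → f α = f β := by
    intro α β h
    have : e ⟨f α, hmem α⟩ = e ⟨f β, hmem β⟩ := Fin.ext h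
    have := e.injective this
    exact Subtype.ext_iff.mp this
  -- block representatives
  have hblock : ∀ j < m, ∃ α, idx α = j := by
    intro j hj
    have hv : (e.symm ⟨j, hj⟩).val ∈ s := (e.symm ⟨j, hj⟩).2
    have hv2 : (e.symm ⟨j, hj⟩).val ∈ Set.range f := (Set.Finite.mem_toFinset hfin).mp hv
    obtain ⟨α, hα⟩ := hv2
    refine ⟨α, ?_⟩
    have : (⟨f α, hmem α⟩ : ↥s) = e.symm ⟨j, hj⟩ := Subtype.ext hα
    simp only [hidxdef, this, Equiv.apply_symm_apply]
  set c : ℕ → lam.out → X := fun j α => if idx α < j then b α else a α with hc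
  set emb : ℕ → X → lam.out → X := fun j t α => if idx α = j then t else c j α with hemb
  set E : ℕ → Set (lam.out → X) := fun j => Set.range (emb j) with hE
  -- c j ∈ E j
  have hcj : ∀ j, c j ∈ E j := by
    intro j
    by_cases hj : j < m
    · obtain ⟨αj, hαj⟩ := hblock j hj
      refine ⟨a αj, funext fun α => ?_⟩
      simp only [hemb, hc]
      by_cases h : idx α = j
      · have : f α = f αj := hinj _ _ (h.trans hαj.symm)
        have ha' : a α = a αj := congrArg Prod.fst this
        simp [h, ha'.symm]
      · simp [h]
    · refine ⟨a (Classical.arbitrary _), funext fun α => ?_⟩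
      simp only [hemb, hc]
      have := hidx α
      have h : idx α ≠ j := by omega
      simp [h]
  -- c (j+1) ∈ E j
  have hcj1 : ∀ j < m, c (j + 1) ∈ E j := by
    intro j hj
    obtain ⟨αj, hαj⟩ := hblock j hj
    refine ⟨b αj, funext fun α => ?_⟩
    simp only [hemb, hc]
    by_cases h : idx α = j
    · have : f α = f αj := hinj _ _ (h.trans hαj.symm)
      have hb' : b α = b αj := congrArg Prod.snd this
      simp [h, hb'.symm]
    · simp only [if_neg h]
      by_cases h2 : idx α < j
      · rw [if_pos h2, if_pos (by omega)]
      · rw [if_neg h2, if_neg (by omega)]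
  -- intersections
  have hinter : ∀ j, j + 1 < m → (E j ∩ E (j + 1)).Nonempty :=
    fun j hj => ⟨c (j + 1), hcj1 j (by omega), hcj (j + 1)⟩
  -- homeomorphisms
  have hhomeo : ∀ j < m, Nonempty (↥(E j) ≃ₜ X) := by
    intro j hj
    obtain ⟨αj, hαj⟩ := hblock j hj
    have key : ∀ t, emb j t αj = t := fun t => by simp [hemb, hαj]
    refine ⟨⟨⟨fun x => x.1 αj, fun t => ⟨emb j t, t, rfl⟩, ?_, ?_⟩, ?_, ?_⟩⟩
    · rintro ⟨x, t, rfl⟩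
      refine Subtype.ext ?_
      show emb j (emb j t αj) = emb j t
      rw [key]
    · intro t
      exact key t
    · exact (continuous_apply αj).comp continuous_subtype_val
    · refine Continuous.subtype_mk ?_ _
      refine continuous_pi fun α => ?_
      by_cases h : idx α = j
      · simp only [hemb, if_pos h]
        exact continuous_id
      · simp only [hemb, if_neg h]
        exact continuous_const
  refine ⟨{S | ∃ j < m, S = E j}, ?_, chain_web E hhomeo hinter, ?_, ?_⟩
  · have : {S | ∃ j < m, S = E j} = E '' Set.Iio m := by
      ext S; simp [Set.mem_image, eq_comm]
    rw [this]
    exact (Set.finite_Iio m).image E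
  · refine ⟨E 0, ⟨0, hm, rfl⟩, ?_⟩
    have : a = c 0 := funext fun α => by simp [hc]
    rw [this]
    exact hcj 0
  · refine ⟨E (m - 1), ⟨m - 1, by omega, rfl⟩, ?_⟩
    have hbm : b = c m := funext fun α => by simp [hc, hidx α]
    have : m = (m - 1) + 1 := by omega
    rw [hbm, this]
    exact hcj1 (m - 1) (by omega)
end

section
/- Let X be a topological space with more than one point and let κ be an infinite cardinal with d(X) ≤ κ. Then there exists a web 𝓔 in the product space X^(2^κ) such that ⋃𝓔 is dense in X^(2^κ) and |𝓔| ≤ κ. -/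
open Cardinal

section Chains
variable {α : Type*} (P : Set α → Prop)

/-- ℕ-indexed chain of sets satisfying `P` with consecutive intersections. -/
def ChainN (A B : Set α) : Prop :=
  ∃ (n : ℕ) (C : ℕ → Set α), (∀ k ≤ n, P (C k)) ∧ C 0 = A ∧ C n = B ∧
    ∀ k < n, (C k ∩ C (k + 1)).Nonempty

variable {P : Set α → Prop}

theorem chainN_refl {A : Set α} (hA : P A) : ChainN P A A :=
  ⟨0, fun _ => A, fun _ _ => hA, rfl, rfl, fun k hk => absurd hk (Nat.not_lt_zero k)⟩

theorem chainN_cons {A B C : Set α} (hA : P A) (hAB : (A ∩ B).Nonempty)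
    (h : ChainN P B C) : ChainN P A C := by
  obtain ⟨n, D, hP, h0, hn, hadj⟩ := h
  refine ⟨n + 1, fun k => if k = 0 then A else D (k - 1), ?_, by simp, ?_, ?_⟩
  · intro k hk
    by_cases hk0 : k = 0
    · simp [hk0, hA]
    · simp only [hk0, if_neg, not_false_iff]
      exact hP _ (by omega)
  · dsimp only
    rw [if_neg (by omega : ¬(n + 1 = 0)), show n + 1 - 1 = n from rfl]
    exact hn
  · intro k hk
    by_cases hk0 : k = 0
    · subst hk0
      simpa [h0] using hAB
    · have h1 := hadj (k - 1) (by omega)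
      rw [show k - 1 + 1 = k from by omega] at h1
      have e1 : (if k = 0 then A else D (k - 1)) = D (k - 1) := if_neg hk0
      have e2 : (if k + 1 = 0 then A else D (k + 1 - 1)) = D k := by
        rw [if_neg (by omega : ¬(k + 1 = 0)), Nat.add_sub_cancel]
      dsimp only
      rw [e1, e2]
      exact h1

theorem chainN_symm {A B : Set α} (h : ChainN P A B) : ChainN P B A := by
  obtain ⟨n, C, hP, h0, hn, hadj⟩ := h
  refine ⟨n, fun k => C (n - k), fun k hk => hP _ (by omega), by simp [hn], by simp [h0], ?_⟩
  intro k hk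
  have h1 := hadj (n - (k + 1)) (by omega)
  rw [show n - (k + 1) + 1 = n - k from by omega] at h1
  exact ⟨h1.choose, h1.choose_spec.2, h1.choose_spec.1⟩

theorem chainN_trans {A B C : Set α} (h1 : ChainN P A B) (h2 : ChainN P B C) :
    ChainN P A C := by
  obtain ⟨n, D, hPD, hD0, hDn, hDadj⟩ := h1
  obtain ⟨m, E, hPE, hE0, hEm, hEadj⟩ := h2
  refine ⟨n + m, fun k => if k ≤ n then D k else E (k - n), ?_, ?_, ?_, ?_⟩
  · intro k hk
    by_cases hkn : k ≤ n
    · simp only [hkn, if_pos]; exact hPD _ hkn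
    · simp only [hkn, if_neg, not_false_iff]; exact hPE _ (by omega)
  · simp [hD0]
  · by_cases hm : m = 0
    · subst hm
      simp only [le_refl, Nat.add_zero, if_pos, hDn]
      rw [← hE0, ← hEm]
    · dsimp only
      rw [if_neg (by omega : ¬ n + m ≤ n), show n + m - n = m from by omega, hEm]
  · intro k hk
    by_cases hkn : k + 1 ≤ n
    · dsimp only
      rw [if_pos (by omega : k ≤ n), if_pos hkn]
      exact hDadj k (by omega)
    · by_cases hkeq : k ≤ n
      · have hkn' : k = n := by omega
        subst hkn'
        dsimp only
        rw [if_pos le_rfl, if_neg hkn, show k + 1 - k = 1 from by omega, hDn, ← hE0]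
        exact hEadj 0 (by omega)
      · dsimp only
        rw [if_neg hkeq, if_neg hkn]
        have h1 := hEadj (k - n) (by omega)
        rw [show k - n + 1 = k + 1 - n from by omega] at h1
        exact h1

/-- Convert an ℕ-indexed chain to the `Fin`-indexed form used in `IsWeb`. -/
theorem chainN_to_fin {A B : Set α} (h : ChainN P A B) :
    ∃ (n : ℕ) (C : Fin (n + 1) → Set α),
      (∀ k, P (C k)) ∧ C 0 = A ∧ C (Fin.last n) = B ∧
      ∀ k : Fin n, (C k.castSucc ∩ C k.succ).Nonempty := by
  obtain ⟨n, C, hP, h0, hn, hadj⟩ := h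
  refine ⟨n, fun k => C k.1, fun k => hP _ (by omega), h0, hn, fun k => ?_⟩
  simpa using hadj k.1 k.2

end Chains

section Steps
variable {X : Type*} [TopologicalSpace X] {J K : Type*}
set_option linter.unusedSectionVars false
attribute [local instance] Classical.propDecidable

/-- The "line" through `c` along the coordinate set `A`. -/
def lineS (A : Set J) (c : J → X) : Set (J → X) :=
  {f | ∃ x : X, ∀ j, (j ∈ A → f j = x) ∧ (j ∉ A → f j = c j)}

theorem mem_lineS {A : Set J} {c f : J → X} {x : X}
    (hon : ∀ j ∈ A, f j = x) (hoff : ∀ j ∉ A, f j = c j) : f ∈ lineS A c :=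
  ⟨x, fun j => ⟨hon j, hoff j⟩⟩

/-- A nonempty-indexed line is homeomorphic to `X`. -/
noncomputable def lineHomeo (A : Set J) (c : J → X) (hA : A.Nonempty) :
    ↥(lineS A c) ≃ₜ X where
  toFun f := f.1 hA.some
  invFun x := ⟨fun j => if j ∈ A then x else c j,
    ⟨x, fun j => ⟨fun hj => if_pos hj, fun hj => if_neg hj⟩⟩⟩
  left_inv f := by
    obtain ⟨x, hx⟩ := f.2
    have hsome : f.1 hA.some = x := (hx hA.some).1 hA.some_mem
    apply Subtype.ext
    funext j
    by_cases h : j ∈ A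
    · show (if j ∈ A then (f : J → X) hA.some else c j) = (f : J → X) j
      rw [if_pos h, hsome, (hx j).1 h]
    · show (if j ∈ A then (f : J → X) hA.some else c j) = (f : J → X) j
      rw [if_neg h, (hx j).2 h]
  right_inv x := by
    show (if hA.some ∈ A then x else c hA.some) = x
    rw [if_pos hA.some_mem]
  continuous_toFun := (continuous_apply _).comp continuous_subtype_val
  continuous_invFun := by
    apply Continuous.subtype_mk
    apply continuous_pi
    intro j
    by_cases h : j ∈ A
    · simpa only [if_pos h] using continuous_id'
    · simpa only [if_neg h] using continuous_const

/-- The block of indices whose `F`-coordinates (via `e`) are given by `σ`. -/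
def Bset (e : J ≃ (K → Bool)) (F : Finset K) (σ : F → Bool) : Set J :=
  {j | ∀ a : F, e j a.1 = σ a}

/-- The step function determined by `F` and block values `w`. -/
def stepf (e : J ≃ (K → Bool)) (F : Finset K) (w : (F → Bool) → X) : J → X :=
  fun j => w fun a => e j a.1

theorem Bset_nonempty (e : J ≃ (K → Bool)) (F : Finset K) (σ : F → Bool) :
    (Bset e F σ).Nonempty := by
  classical
  refine ⟨e.symm fun k => if h : k ∈ F then σ ⟨k, h⟩ else false, fun a => ?_⟩
  simp [Bset, Equiv.apply_symm_apply, dif_pos a.2]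

theorem mem_Bset_iff {e : J ≃ (K → Bool)} {F : Finset K} {σ : F → Bool} {j : J} :
    j ∈ Bset e F σ ↔ (fun a : F => e j a.1) = σ := by
  constructor
  · intro h; funext a; exact h a
  · intro h a; exact congrFun h a

theorem stepf_eq_of_mem {e : J ≃ (K → Bool)} {F : Finset K} {w : (F → Bool) → X}
    {σ : F → Bool} {j : J} (h : j ∈ Bset e F σ) : stepf e F w j = w σ := by
  unfold stepf
  rw [mem_Bset_iff.mp h]

theorem step_mem_self (e : J ≃ (K → Bool)) (F : Finset K) (w : (F → Bool) → X)
    (σ : F → Bool) : stepf e F w ∈ lineS (Bset e F σ) (stepf e F w) :=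
  mem_lineS (x := w σ) (fun _ hj => stepf_eq_of_mem hj) (fun _ _ => rfl)

theorem update_step_mem (e : J ≃ (K → Bool))
    (F : Finset K) (w : (F → Bool) → X) (σ : F → Bool) (y : X) :
    stepf e F (Function.update w σ y) ∈ lineS (Bset e F σ) (stepf e F w) := by
  refine mem_lineS (x := y) (fun j hj => ?_) (fun j hj => ?_)
  · rw [stepf_eq_of_mem hj, Function.update_self]
  · have hne : (fun a : F => e j a.1) ≠ σ := fun h => hj (mem_Bset_iff.mpr h)
    unfold stepf
    rw [Function.update_of_ne hne]

theorem step_mem_single (e : J ≃ (K → Bool)) (F : Finset K) (w : (F → Bool) → X)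
    (j₀ : J) : stepf e F w ∈ lineS {j₀} (stepf e F w) :=
  mem_lineS (x := stepf e F w j₀) (fun j hj => by rw [hj]) (fun _ _ => rfl)

/-- The indexed family of lines making up the web. -/
def memb (e : J ≃ (K → Bool)) (j₀ : J) (D : Set X) :
    (Σ F : Finset K, ((F → Bool) → D) × Option (F → Bool)) → Set (J → X) :=
  fun t => t.2.2.elim (lineS {j₀} (stepf e t.1 fun τ => ((t.2.1 τ : X))))
    (fun σ => lineS (Bset e t.1 σ) (stepf e t.1 fun τ => ((t.2.1 τ : X))))

end Steps

theorem main_web {X : Type u} [TopologicalSpace X] {J K : Type u}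
    (e : J ≃ (K → Bool)) [Infinite K] {κ : Cardinal.{u}} (hκ : ℵ₀ ≤ κ)
    (hK : #K ≤ κ) {D : Set X} (hD : Dense D) (hDc : #D ≤ κ)
    {x₀ : X} (hx₀ : x₀ ∈ D) :
    ∃ 𝓔 : Set (Set (J → X)), IsWeb 𝓔 ∧ Dense (⋃₀ 𝓔) ∧ #𝓔 ≤ κ := by
  classical
  set j₀ : J := e.symm fun _ => false with hj₀
  set σ₀ : ((∅ : Finset K) → Bool) := fun _ => false with hσ₀
  set w₀ : ((∅ : Finset K) → Bool) → D := fun _ => ⟨x₀, hx₀⟩ with hw₀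
  set Δ : Set (J → X) := lineS (Bset e ∅ σ₀) (stepf e ∅ fun τ => ((w₀ τ : X))) with hΔ
  have hΔmem : Δ ∈ Set.range (memb e j₀ D) := ⟨⟨∅, w₀, some σ₀⟩, rfl⟩
  have hBset_univ : ∀ j : J, j ∈ Bset e ∅ σ₀ := fun j a =>
    absurd a.2 (Finset.notMem_empty _)
  -- key chain lemma: every block line reaches Δ
  have key : ∀ (m : ℕ) (F : Finset K) (w : (F → Bool) → D) (σ : F → Bool),
      (Finset.univ.filter fun τ => ((w τ : X)) ≠ x₀).card ≤ m →
      ChainN (· ∈ Set.range (memb e j₀ D))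
        (lineS (Bset e F σ) (stepf e F fun τ => ((w τ : X)))) Δ := by
    intro m
    induction m with
    | zero =>
      intro F w σ hcard
      have hall : ∀ τ, ((w τ : X)) = x₀ := by
        intro τ
        by_contra h
        have hτ : τ ∈ Finset.univ.filter fun τ => ((w τ : X)) ≠ x₀ := by
          simp [h]
        have := Finset.card_pos.mpr ⟨τ, hτ⟩
        omega
      refine chainN_cons ⟨⟨F, w, some σ⟩, rfl⟩ ?_ (chainN_refl hΔmem)
      refine ⟨stepf e F fun τ => ((w τ : X)), step_mem_self e F _ σ, ?_⟩
      exact mem_lineS (x := x₀) (fun j _ => hall _) (fun j hj => (hj (hBset_univ j)).elim)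
    | succ m ih =>
      intro F w σ hcard
      by_cases hzero : (Finset.univ.filter fun τ => ((w τ : X)) ≠ x₀).card = 0
      · exact ih F w σ (by omega)
      · obtain ⟨τ, hτmem⟩ := Finset.card_pos.mp (Nat.pos_of_ne_zero hzero)
        have hτ : ((w τ : X)) ≠ x₀ := (Finset.mem_filter.mp hτmem).2
        set w' : (F → Bool) → D := Function.update w τ (⟨x₀, hx₀⟩ : D) with hw'
        have hcoe : (fun τ' => ((w' τ' : X))) =
            Function.update (fun τ' => ((w τ' : X))) τ x₀ := by
          funext τ'
          by_cases h : τ' = τ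
          · subst h; simp [hw']
          · simp [hw', Function.update_of_ne h]
        have hcard' : (Finset.univ.filter fun τ' => ((w' τ' : X)) ≠ x₀).card ≤ m := by
          have hsub : (Finset.univ.filter fun τ' => ((w' τ' : X)) ≠ x₀) ⊆
              (Finset.univ.filter fun τ' => ((w τ' : X)) ≠ x₀).erase τ := by
            intro τ' h
            rw [Finset.mem_filter] at h
            have hne : τ' ≠ τ := by
              rintro rfl
              exact h.2 (by simp [hw'])
            refine Finset.mem_erase.mpr ⟨hne, Finset.mem_filter.mpr ⟨Finset.mem_univ _, ?_⟩⟩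
            have := h.2
            rwa [hw', Function.update_of_ne hne] at this
          have h1 := Finset.card_le_card hsub
          rw [Finset.card_erase_of_mem hτmem] at h1
          omega
        refine chainN_cons ⟨⟨F, w, some σ⟩, rfl⟩
          ⟨stepf e F fun τ' => ((w τ' : X)),
            step_mem_self e F _ σ, step_mem_self e F _ τ⟩ ?_
        refine chainN_cons ⟨⟨F, w, some τ⟩, rfl⟩ ?_ (ih F w' τ hcard')
        have h1 := update_step_mem e F (fun τ' => ((w τ' : X))) τ x₀
        rw [← hcoe] at h1
        exact ⟨_, h1, step_mem_self e F _ τ⟩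
  -- every member reaches Δ
  have toΔ : ∀ t, ChainN (· ∈ Set.range (memb e j₀ D)) (memb e j₀ D t) Δ := by
    rintro ⟨F, w, o⟩
    cases o with
    | some σ => exact key _ F w σ le_rfl
    | none =>
      refine chainN_cons ⟨⟨F, w, none⟩, rfl⟩ ?_ (key _ F w (fun _ => true) le_rfl)
      exact ⟨stepf e F fun τ => ((w τ : X)), step_mem_single e F _ j₀,
        step_mem_self e F _ (fun _ => true)⟩
  refine ⟨Set.range (memb e j₀ D), ⟨?_, ?_⟩, ?_, ?_⟩
  · -- every member is homeomorphic to X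
    rintro A ⟨⟨F, w, o⟩, rfl⟩
    cases o with
    | none => exact ⟨lineHomeo _ _ ⟨j₀, rfl⟩⟩
    | some σ => exact ⟨lineHomeo _ _ (Bset_nonempty e F σ)⟩
  · -- connectivity
    rintro A ⟨ta, rfl⟩ B ⟨tb, rfl⟩
    exact chainN_to_fin (chainN_trans (toΔ ta) (chainN_symm (toΔ tb)))
  · -- density
    have hsub : {f : J → X | ∃ (F : Finset K) (w : (F → Bool) → D),
        f = stepf e F fun τ => ((w τ : X))} ⊆ ⋃₀ Set.range (memb e j₀ D) := by
      rintro f ⟨F, w, rfl⟩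
      exact ⟨memb e j₀ D ⟨F, w, none⟩, ⟨_, rfl⟩, step_mem_single e F _ j₀⟩
    refine Dense.mono hsub ?_
    rw [dense_iff_inter_open]
    rintro U hU ⟨f, hf⟩
    obtain ⟨s, u, h1, h2⟩ := isOpen_pi_iff.mp hU f hf
    have hKne : Nonempty K := inferInstance
    set sep : J → J → K := fun i i' =>
      if h : e i ≠ e i' then Classical.choose (Function.ne_iff.mp h)
      else Classical.arbitrary K with hsepdef
    have hsep : ∀ i i', e i ≠ e i' → e i (sep i i') ≠ e i' (sep i i') := by
      intro i i' h
      simp only [hsepdef, dif_pos h]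
      exact Classical.choose_spec (Function.ne_iff.mp h)
    set F : Finset K := s.biUnion fun i => s.biUnion fun i' => {sep i i'} with hF
    have hob : ∀ i ∈ s, ∃ x, x ∈ D ∧ x ∈ u i := by
      intro i hi
      obtain ⟨x, hx1, hx2⟩ := hD.exists_mem_open (h1 i hi).1 ⟨f i, (h1 i hi).2⟩
      exact ⟨x, hx1, hx2⟩
    set d : J → X := fun i => if h : i ∈ s then (hob i h).choose else x₀ with hd
    have hdspec : ∀ i ∈ s, d i ∈ D ∧ d i ∈ u i := by
      intro i h
      simp only [hd, dif_pos h]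
      exact (hob i h).choose_spec
    set w : (F → Bool) → D := fun τ =>
      if h : ∃ i, i ∈ s ∧ (fun a : F => e i a.1) = τ then
        ⟨d h.choose, (hdspec _ h.choose_spec.1).1⟩ else ⟨x₀, hx₀⟩ with hw
    refine ⟨stepf e F fun τ => ((w τ : X)), h2 ?_, F, w, rfl⟩
    intro i hi
    have hi' : i ∈ s := hi
    have hex : ∃ i', i' ∈ s ∧ (fun a : F => e i' a.1) = (fun a : F => e i a.1) :=
      ⟨i, hi', rfl⟩
    show ((w (fun a : F => e i a.1) : X)) ∈ u i
    have heq : hex.choose = i := by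
      by_contra hne
      have hne' : e hex.choose ≠ e i := fun h => hne (e.injective h)
      have hkF : sep hex.choose i ∈ F := by
        exact Finset.mem_biUnion.mpr ⟨hex.choose, hex.choose_spec.1,
          Finset.mem_biUnion.mpr ⟨i, hi', Finset.mem_singleton_self _⟩⟩
      exact hsep _ _ hne' (congrFun hex.choose_spec.2 ⟨_, hkF⟩)
    have hwval : ((w (fun a : F => e i a.1) : X)) = d hex.choose := by
      simp only [hw, dif_pos hex]
    rw [hwval, heq]
    exact (hdspec i hi').2
  · -- cardinality
    have hbound : ∀ F : Finset K, #(((F → Bool) → D) × Option (F → Bool)) ≤ κ := by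
      intro F
      have h1 : #((F → Bool) → D) ≤ κ := by
        rw [← Cardinal.power_def, Cardinal.mk_fintype (F → Bool)]
        calc #D ^ (Fintype.card (↥F → Bool) : Cardinal)
            ≤ κ ^ (Fintype.card (↥F → Bool) : Cardinal) :=
              power_le_power_right hDc
          _ = κ ^ (Fintype.card (↥F → Bool)) := power_natCast _ _
          _ ≤ κ := power_nat_le hκ
      have h2 : #(Option (↥F → Bool)) ≤ κ := le_trans mk_le_aleph0 hκ
      calc #(((F → Bool) → D) × Option (F → Bool))
          = #((F → Bool) → D) * #(Option (↥F → Bool)) := by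
            rw [Cardinal.mk_prod, Cardinal.lift_id, Cardinal.lift_id]
        _ ≤ κ * κ := mul_le_mul' h1 h2
        _ = κ := mul_eq_self hκ
    calc #↥(Set.range (memb e j₀ D))
        ≤ #(Σ F : Finset K, ((F → Bool) → D) × Option (F → Bool)) := mk_range_le
      _ = Cardinal.sum fun F : Finset K =>
            #(((F → Bool) → D) × Option (F → Bool)) := mk_sigma _
      _ ≤ Cardinal.sum fun _ : Finset K => κ := Cardinal.sum_le_sum _ _ hbound
      _ = #(Finset K) * κ := Cardinal.sum_const' _ _
      _ ≤ κ * κ := mul_le_mul_left ((mk_finset_of_infinite K).le.trans hK) κ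
      _ = κ := mul_eq_self hκ

/-- if `X` has more than one point and `κ ≥ ω` with `d(X) ≤ κ`,
then there is a web `𝓔` in `X^(2^κ)` with `⋃𝓔` dense and `|𝓔| ≤ κ`. -/
theorem stmt8 {X : Type u} [TopologicalSpace X] (hX : Nontrivial X)
    (κ : Cardinal.{u}) (hκ : ℵ₀ ≤ κ) (hd : density X ≤ κ) :
    ∃ 𝓔 : Set (Set (((2 : Cardinal.{u}) ^ κ).out → X)),
      IsWeb 𝓔 ∧ Dense (⋃₀ 𝓔) ∧ #𝓔 ≤ κ := by
  have hne : {c : Cardinal.{u} | ∃ s : Set X, Dense s ∧ #s = c}.Nonempty :=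
    ⟨#(Set.univ : Set X), Set.univ, dense_univ, rfl⟩
  obtain ⟨D, hD, hDcard⟩ := csInf_mem hne
  have hDc : #D ≤ κ := le_trans (le_of_eq hDcard) hd
  have hXne : Nonempty X := ⟨hX.exists_pair_ne.choose⟩
  obtain ⟨x₀, hx₀⟩ : D.Nonempty := hD.nonempty
  haveI : Infinite κ.out := Cardinal.infinite_iff.mpr (by rw [Cardinal.mk_out]; exact hκ)
  have h2 : #(κ.out → Bool) = 2 ^ κ := by
    rw [Cardinal.mk_arrow]
    simp [Cardinal.mk_out]
  have hcardeq : #(((2 : Cardinal.{u}) ^ κ).out) = #(κ.out → Bool) :=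
    (Cardinal.mk_out _).trans h2.symm
  obtain ⟨e⟩ := Cardinal.eq.mp hcardeq
  exact main_web e hκ (le_of_eq (Cardinal.mk_out κ)) hD hDc hx₀
end

section
/- For every uncountable cardinal κ there exists a regular T1 topological space L such that |L| = κ and every continuous real-valued function on L is constant. -/
open Cardinal Set

universe u

namespace S10

/-- Points of the space: `sh t` are the shared (level-0) axis points; `ax p l t` is the
axis point of the copy attached to `p`, at level `l+1`, slot `t`; `hp p k s t` is the
"helper" (connector) point of the copy attached to `p`, at level `k`, joining the
level-`k` axis slot `s` to the level-`k+1` axis slot `t`. -/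
inductive Pt (T : Type u) : Type u
  | sh (t : T)
  | ax (p : Pt T) (l : ℕ) (t : T)
  | hp (p : Pt T) (k : ℕ) (s t : T)

variable {T : Type u}

/-- The tail (from radius `r`) of the copy attached to `z` is contained in `U`. -/
def TailIn (z : Pt T) (r : ℕ) (U : Set (Pt T)) : Prop :=
  (∀ l t, r ≤ l + 1 → Pt.ax z l t ∈ U) ∧ (∀ k s t, r ≤ k → Pt.hp z k s t ∈ U)

theorem TailIn.mono {z : Pt T} {r r' : ℕ} {U : Set (Pt T)} (h : TailIn z r U) (hr : r ≤ r') :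
    TailIn z r' U :=
  ⟨fun l t hl => h.1 l t (hr.trans hl), fun k s t hk => h.2 k s t (hr.trans hk)⟩

/-- Openness predicate for the topology on `Pt T`. -/
def Opn (U : Set (Pt T)) : Prop :=
  ∀ z ∈ U, (∃ r, TailIn z r U) ∧
    (∀ t, z = Pt.sh t → ∀ p, {x : T | Pt.hp p 0 t x ∉ U}.Finite) ∧
    (∀ p l t, z = Pt.ax p l t →
      {x : T | Pt.hp p (l+1) t x ∉ U}.Finite ∧ {s : T | Pt.hp p l s t ∉ U}.Finite)

instance : TopologicalSpace (Pt T) where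
  IsOpen := Opn
  isOpen_univ := by
    intro z _
    refine ⟨⟨0, fun l t _ => trivial, fun k s t _ => trivial⟩, ?_, ?_⟩
    · intro t _ p
      simpa using Set.finite_empty
    · intro p l t _
      constructor <;> simpa using Set.finite_empty
  isOpen_inter := by
    intro U V hU hV z hz
    obtain ⟨⟨r1, h1⟩, hsh1, hax1⟩ := hU z hz.1
    obtain ⟨⟨r2, h2⟩, hsh2, hax2⟩ := hV z hz.2
    refine ⟨⟨max r1 r2, ?_, ?_⟩, ?_, ?_⟩
    · exact fun l t hl => ⟨h1.1 l t ((le_max_left _ _).trans hl), h2.1 l t ((le_max_right _ _).trans hl)⟩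
    · exact fun k s t hk => ⟨h1.2 k s t ((le_max_left _ _).trans hk), h2.2 k s t ((le_max_right _ _).trans hk)⟩
    · intro t hzt p
      refine Set.Finite.subset ((hsh1 t hzt p).union (hsh2 t hzt p)) ?_
      intro x hx
      by_cases hxu : Pt.hp p 0 t x ∈ U
      · exact Or.inr (fun h => hx ⟨hxu, h⟩)
      · exact Or.inl hxu
    · intro p l t hzt
      constructor
      · refine Set.Finite.subset (((hax1 p l t hzt).1).union ((hax2 p l t hzt).1)) ?_
        intro x hx
        by_cases hxu : Pt.hp p (l+1) t x ∈ U
        · exact Or.inr (fun h => hx ⟨hxu, h⟩)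
        · exact Or.inl hxu
      · refine Set.Finite.subset (((hax1 p l t hzt).2).union ((hax2 p l t hzt).2)) ?_
        intro s hx
        by_cases hxu : Pt.hp p l s t ∈ U
        · exact Or.inr (fun h => hx ⟨hxu, h⟩)
        · exact Or.inl hxu
  isOpen_sUnion := by
    intro S hS z hz
    obtain ⟨U, hUS, hzU⟩ := hz
    obtain ⟨⟨r, hr⟩, hsh, hax⟩ := hS U hUS z hzU
    have hsub : U ⊆ ⋃₀ S := fun w hw => ⟨U, hUS, hw⟩
    refine ⟨⟨r, fun l t hl => hsub (hr.1 l t hl), fun k s t hk => hsub (hr.2 k s t hk)⟩, ?_, ?_⟩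
    · intro t hzt p
      exact Set.Finite.subset (hsh t hzt p) (fun x hx => fun h => hx (hsub h))
    · intro p l t hzt
      exact ⟨Set.Finite.subset (hax p l t hzt).1 (fun x hx => fun h => hx (hsub h)),
        Set.Finite.subset (hax p l t hzt).2 (fun x hx => fun h => hx (hsub h))⟩

theorem isOpen_iff {U : Set (Pt T)} : IsOpen U ↔ Opn U := Iff.rfl

/-- The level index used to dodge a point with tails. -/
def lvl : Pt T → ℕ
  | .sh _ => 0
  | .ax _ l _ => l
  | .hp _ k _ _ => k

instance : T1Space (Pt T) := by
  refine ⟨fun w => ?_⟩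
  rw [← isOpen_compl_iff, isOpen_iff]
  intro z hz
  refine ⟨⟨lvl w + 2, ?_, ?_⟩, ?_, ?_⟩
  · intro l t hl hmem
    simp only [mem_singleton_iff] at hmem
    subst hmem
    simp only [lvl] at hl
    omega
  · intro k s t hk hmem
    simp only [mem_singleton_iff] at hmem
    subst hmem
    simp only [lvl] at hk
    omega
  · intro t _ p
    have : {x : T | Pt.hp p 0 t x ∉ ({w} : Set (Pt T))ᶜ}.Subsingleton := by
      intro a ha b hb
      simp only [mem_setOf_eq, not_not, mem_compl_iff, mem_singleton_iff, not_not] at ha hb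
      have : Pt.hp p 0 t a = Pt.hp p 0 t b := ha.trans hb.symm
      exact (Pt.hp.injEq _ _ _ _ _ _ _ _).mp this |>.2.2.2
    exact this.finite
  · intro p l t _
    constructor
    · have : {x : T | Pt.hp p (l+1) t x ∉ ({w} : Set (Pt T))ᶜ}.Subsingleton := by
        intro a ha b hb
        simp only [mem_setOf_eq, not_not, mem_compl_iff, mem_singleton_iff, not_not] at ha hb
        have : Pt.hp p (l+1) t a = Pt.hp p (l+1) t b := ha.trans hb.symm
        exact (Pt.hp.injEq _ _ _ _ _ _ _ _).mp this |>.2.2.2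
      exact this.finite
    · have : {s : T | Pt.hp p l s t ∉ ({w} : Set (Pt T))ᶜ}.Subsingleton := by
        intro a ha b hb
        simp only [mem_setOf_eq, not_not, mem_compl_iff, mem_singleton_iff, not_not] at ha hb
        have : Pt.hp p l a t = Pt.hp p l b t := ha.trans hb.symm
        exact (Pt.hp.injEq _ _ _ _ _ _ _ _).mp this |>.2.2.1
      exact this.finite


open Classical in
noncomputable def rfun (U : Set (Pt T)) : Pt T → ℕ := fun q =>
  if h : ∃ r, 1 ≤ r ∧ TailIn q r U then h.choose else 1

theorem rfun_spec {U : Set (Pt T)} (hU : Opn U) {q : Pt T} (hq : q ∈ U) :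
    1 ≤ rfun U q ∧ TailIn q (rfun U q) U := by
  obtain ⟨⟨r, hr⟩, -, -⟩ := hU q hq
  have hex : ∃ r, 1 ≤ r ∧ TailIn q r U := by
    refine ⟨max r 1, le_max_right _ _, ?_, ?_⟩
    · exact fun l t hl => hr.1 l t ((le_max_left _ _).trans hl)
    · exact fun k s t hk => hr.2 k s t ((le_max_left _ _).trans hk)
  classical
  rw [rfun]
  rw [dif_pos hex]
  exact hex.choose_spec

variable (z : Pt T) (U : Set (Pt T)) (r : Pt T → ℕ)

inductive Vgen : Pt T → Prop
  | base : Vgen z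
  | tailAx (q l t) : Vgen q → r q ≤ l → Vgen (Pt.ax q l t)
  | tailHp (q k s t) : Vgen q → r q + 1 ≤ k → Vgen (Pt.hp q k s t)
  | pcSh (tz p x) : Vgen (Pt.sh tz) → Pt.hp p 0 tz x ∈ U → Vgen (Pt.hp p 0 tz x)
  | pcOut (p l t x) : Vgen (Pt.ax p l t) → Pt.hp p (l+1) t x ∈ U → Vgen (Pt.hp p (l+1) t x)
  | pcIn (p l s t) : Vgen (Pt.ax p l t) → Pt.hp p l s t ∈ U → Vgen (Pt.hp p l s t)

def ZP (w : Pt T) : Prop :=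
  (∃ tz p x, z = Pt.sh tz ∧ w = Pt.hp p 0 tz x) ∨
  (∃ pz kz tz x, z = Pt.ax pz kz tz ∧ w = Pt.hp pz (kz+1) tz x) ∨
  (∃ pz kz tz s, z = Pt.ax pz kz tz ∧ w = Pt.hp pz kz s tz)

def Inv (w : Pt T) : Prop :=
  w = z ∨
  (∃ q, Vgen z U r q ∧ ((∃ l t, w = Pt.ax q l t ∧ r q ≤ l) ∨
    (∃ k s t, w = Pt.hp q k s t ∧ r q ≤ k))) ∨
  ZP z w

variable {z U r}

theorem Vsub (hzU : z ∈ U) (hr : ∀ q ∈ U, 1 ≤ r q ∧ TailIn q (r q) U) :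
    ∀ w, Vgen z U r w → w ∈ U := by
  intro w hw
  induction hw with
  | base => exact hzU
  | tailAx q l t hq hl ih => exact (hr q ih).2.1 l t (le_trans hl (Nat.le_succ l))
  | tailHp q k s t hq hk ih => exact (hr q ih).2.2 k s t (le_trans (Nat.le_succ _) hk)
  | pcSh tz p x hq hx ih => exact hx
  | pcOut p l t x hq hx ih => exact hx
  | pcIn p l s t hq hx ih => exact hx

theorem Vinv : ∀ w, Vgen z U r w → Inv z U r w := by
  intro w hw
  induction hw with
  | base => exact Or.inl rfl
  | tailAx q l t hq hl ih =>
      exact Or.inr (Or.inl ⟨q, hq, Or.inl ⟨l, t, rfl, hl⟩⟩)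
  | tailHp q k s t hq hk ih =>
      exact Or.inr (Or.inl ⟨q, hq, Or.inr ⟨k, s, t, rfl, le_trans (Nat.le_succ _) hk⟩⟩)
  | pcSh tz p x hq hx ih =>
      -- parent is `sh tz ∈ V`; by IH its Inv form forces `sh tz = z`
      rcases ih with h | h | h
      · exact Or.inr (Or.inr (Or.inl ⟨tz, p, x, h.symm, rfl⟩))
      · rcases h with ⟨q, hq, ⟨l, t, heq, -⟩ | ⟨k, s, t, heq, -⟩⟩ <;> cases heq
      · rcases h with ⟨tz', p', x', hz, heq⟩ | ⟨pz, kz, tz', x', hz, heq⟩ |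
          ⟨pz, kz, tz', s', hz, heq⟩ <;> cases heq
  | pcOut p l t x hq hx ih =>
      rcases ih with h | h | h
      · -- parent = z, z = ax p l t
        exact Or.inr (Or.inr (Or.inr (Or.inl ⟨p, l, t, x, h.symm, rfl⟩)))
      · rcases h with ⟨q, hq, ⟨l', t', heq, hle⟩ | ⟨k, s, t', heq, -⟩⟩
        · obtain ⟨rfl, rfl, rfl⟩ := Pt.ax.inj heq
          exact Or.inr (Or.inl ⟨p, hq, Or.inr ⟨l+1, t, x, rfl, le_trans hle (Nat.le_succ _)⟩⟩)
        · cases heq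
      · rcases h with ⟨tz', p', x', hz, heq⟩ | ⟨pz, kz, tz', x', hz, heq⟩ |
          ⟨pz, kz, tz', s', hz, heq⟩ <;> cases heq
  | pcIn p l s t hq hx ih =>
      rcases ih with h | h | h
      · exact Or.inr (Or.inr (Or.inr (Or.inr ⟨p, l, t, s, h.symm, rfl⟩)))
      · rcases h with ⟨q, hq, ⟨l', t', heq, hle⟩ | ⟨k, s', t', heq, -⟩⟩
        · obtain ⟨rfl, rfl, rfl⟩ := Pt.ax.inj heq
          exact Or.inr (Or.inl ⟨p, hq, Or.inr ⟨l, s, t, rfl, hle⟩⟩)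
        · cases heq
      · rcases h with ⟨tz', p', x', hz, heq⟩ | ⟨pz, kz, tz', x', hz, heq⟩ |
          ⟨pz, kz, tz', s', hz, heq⟩ <;> cases heq

end S10

namespace S10

variable {T : Type u} {z : Pt T} {U : Set (Pt T)} {r : Pt T → ℕ}

theorem finV_tgt (hzU : z ∈ U) (hr : ∀ q ∈ U, 1 ≤ r q ∧ TailIn q (r q) U)
    {p : Pt T} {K : ℕ} {tsrc : T}
    (hk : ¬ (Vgen z U r p ∧ r p ≤ K))
    (hne : ∀ (pz : Pt T) (kz : ℕ) (tz : T), z = Pt.ax pz kz tz → ¬ (p = pz ∧ K = kz + 1 ∧ tsrc = tz))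
    (hsh : ∀ tz : T, z = Pt.sh tz → ¬ (K = 0 ∧ tsrc = tz)) :
    {x : T | Vgen z U r (Pt.hp p K tsrc x)}.Finite := by
  have h0 : {x : T | Pt.hp p K tsrc x = z}.Finite := by
    apply Set.Subsingleton.finite
    intro a ha b hb
    simp only [mem_setOf_eq] at ha hb
    have := ha.trans hb.symm
    exact (Pt.hp.inj this).2.2.2
  have h2 : {x : T | ∃ (pz : Pt T) (kz : ℕ) (tz : T), z = Pt.ax pz kz tz ∧ x = tz}.Finite := by
    apply Set.Subsingleton.finite
    rintro a ⟨pz, kz, tz, hz, rfl⟩ b ⟨pz', kz', tz', hz', rfl⟩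
    exact ((Pt.ax.inj (hz.symm.trans hz')).2.2)
  refine Set.Finite.subset (h0.union h2) ?_
  intro x hx
  simp only [mem_setOf_eq] at hx
  rcases Vinv _ hx with h | h | h
  · exact Or.inl h
  · rcases h with ⟨q, hq, ⟨l, t, heq, -⟩ | ⟨k, s, t, heq, hle⟩⟩
    · cases heq
    · obtain ⟨rfl, rfl, rfl, rfl⟩ := Pt.hp.inj heq
      exact absurd ⟨hq, hle⟩ hk
  · rcases h with ⟨tz, p', x', hz, heq⟩ | ⟨pz, kz, tz, x', hz, heq⟩ | ⟨pz, kz, tz, s', hz, heq⟩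
    · obtain ⟨rfl, h0', rfl, rfl⟩ := Pt.hp.inj heq
      exact absurd ⟨h0', rfl⟩ (hsh _ hz)
    · obtain ⟨rfl, hK, rfl, rfl⟩ := Pt.hp.inj heq
      exact absurd ⟨rfl, hK, rfl⟩ (hne _ _ _ hz)
    · obtain ⟨rfl, rfl, rfl, rfl⟩ := Pt.hp.inj heq
      exact Or.inr ⟨_, _, _, hz, rfl⟩

theorem finV_src (hzU : z ∈ U) (hr : ∀ q ∈ U, 1 ≤ r q ∧ TailIn q (r q) U)
    {p : Pt T} {K : ℕ} {ttgt : T}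
    (hk : ¬ (Vgen z U r p ∧ r p ≤ K))
    (hax2 : ∀ (pz : Pt T) (kz : ℕ) (tz : T), z = Pt.ax pz kz tz → ¬ (p = pz ∧ K = kz ∧ ttgt = tz)) :
    {s : T | Vgen z U r (Pt.hp p K s ttgt)}.Finite := by
  have h0 : {s : T | Pt.hp p K s ttgt = z}.Finite := by
    apply Set.Subsingleton.finite
    intro a ha b hb
    simp only [mem_setOf_eq] at ha hb
    exact (Pt.hp.inj (ha.trans hb.symm)).2.2.1
  have h2 : {s : T | (∃ tz : T, z = Pt.sh tz ∧ s = tz) ∨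
      (∃ (pz : Pt T) (kz : ℕ) (tz : T), z = Pt.ax pz kz tz ∧ s = tz)}.Finite := by
    apply Set.Subsingleton.finite
    rintro a (⟨tz, hz, rfl⟩ | ⟨pz, kz, tz, hz, rfl⟩) b (⟨tz', hz', rfl⟩ | ⟨pz', kz', tz', hz', rfl⟩)
    · exact Pt.sh.inj (hz.symm.trans hz')
    · cases hz.symm.trans hz'
    · cases hz.symm.trans hz'
    · exact (Pt.ax.inj (hz.symm.trans hz')).2.2
  refine Set.Finite.subset (h0.union h2) ?_
  intro s hs
  simp only [mem_setOf_eq] at hs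
  rcases Vinv _ hs with h | h | h
  · exact Or.inl h
  · rcases h with ⟨q, hq, ⟨l, t, heq, -⟩ | ⟨k, s', t, heq, hle⟩⟩
    · cases heq
    · obtain ⟨rfl, rfl, rfl, rfl⟩ := Pt.hp.inj heq
      exact absurd ⟨hq, hle⟩ hk
  · rcases h with ⟨tz, p', x', hz, heq⟩ | ⟨pz, kz, tz, x', hz, heq⟩ | ⟨pz, kz, tz, s', hz, heq⟩
    · obtain ⟨rfl, h0', rfl, rfl⟩ := Pt.hp.inj heq
      exact Or.inr (Or.inl ⟨_, hz, rfl⟩)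
    · obtain ⟨rfl, hK, rfl, rfl⟩ := Pt.hp.inj heq
      exact Or.inr (Or.inr ⟨_, _, _, hz, rfl⟩)
    · obtain ⟨rfl, hK, rfl, rfl⟩ := Pt.hp.inj heq
      exact absurd ⟨rfl, hK, rfl⟩ (hax2 _ _ _ hz)

end S10

namespace S10

variable {T : Type u}

variable (z : Pt T) (U : Set (Pt T)) (r : Pt T → ℕ) (w₀ : Pt T)

inductive Wgen : Pt T → Prop
  | base : Wgen w₀
  | tailAx (q l t) : Wgen q → lvl z + 2 ≤ l + 1 → Wgen (Pt.ax q l t)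
  | tailHp (q k s t) : Wgen q → lvl z + 2 ≤ k → Wgen (Pt.hp q k s t)
  | pcSh (tq p x) : Wgen (Pt.sh tq) → ¬ Vgen z U r (Pt.hp p 0 tq x) → Wgen (Pt.hp p 0 tq x)
  | pcOut (p l t x) : Wgen (Pt.ax p l t) → ¬ Vgen z U r (Pt.hp p (l+1) t x) →
      Wgen (Pt.hp p (l+1) t x)
  | pcIn (p l s t) : Wgen (Pt.ax p l t) → ¬ Vgen z U r (Pt.hp p l s t) → Wgen (Pt.hp p l s t)

variable {z U r w₀}

theorem Wdisj (hw₀ : ¬ Vgen z U r w₀) : ∀ w, Wgen z U r w₀ w → ¬ Vgen z U r w := by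
  intro w hw
  induction hw with
  | base => exact hw₀
  | tailAx q l t hq hl ih =>
      intro hV
      rcases Vinv _ hV with heq | h | h
      · subst heq; simp only [lvl] at hl; omega
      · rcases h with ⟨q', hq', ⟨l', t', heq, -⟩ | ⟨k, s, t', heq, -⟩⟩
        · obtain ⟨rfl, -, -⟩ := Pt.ax.inj heq
          exact ih hq'
        · cases heq
      · rcases h with ⟨tz, p', x', hz, heq⟩ | ⟨pz, kz, tz, x', hz, heq⟩ |
          ⟨pz, kz, tz, s', hz, heq⟩ <;> cases heq
  | tailHp q k s t hq hk ih =>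
      intro hV
      rcases Vinv _ hV with heq | h | h
      · subst heq; simp only [lvl] at hk; omega
      · rcases h with ⟨q', hq', ⟨l', t', heq, -⟩ | ⟨k', s', t', heq, -⟩⟩
        · cases heq
        · obtain ⟨rfl, -, -, -⟩ := Pt.hp.inj heq
          exact ih hq'
      · rcases h with ⟨tz, p', x', hz, heq⟩ | ⟨pz, kz, tz, x', hz, heq⟩ |
          ⟨pz, kz, tz, s', hz, heq⟩
        · obtain ⟨rfl, rfl, rfl, rfl⟩ := Pt.hp.inj heq
          subst hz; simp only [lvl] at hk; omega
        · obtain ⟨rfl, rfl, rfl, rfl⟩ := Pt.hp.inj heq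
          subst hz; simp only [lvl] at hk; omega
        · obtain ⟨rfl, rfl, rfl, rfl⟩ := Pt.hp.inj heq
          subst hz; simp only [lvl] at hk; omega
  | pcSh tq p x hq hnv ih => exact hnv
  | pcOut p l t x hq hnv ih => exact hnv
  | pcIn p l s t hq hnv ih => exact hnv

theorem Wax_inv (hw₀ : ¬ Vgen z U r w₀) {p : Pt T} {j : ℕ} {t : T}
    (hw : Wgen z U r w₀ (Pt.ax p j t)) : w₀ = Pt.ax p j t ∨ ¬ Vgen z U r p := by
  cases hw with
  | base => exact Or.inl rfl
  | tailAx q l t hq hl => exact Or.inr (Wdisj hw₀ _ hq)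

end S10

namespace S10

variable {T : Type u} {z : Pt T} {U : Set (Pt T)} {r : Pt T → ℕ} {w₀ : Pt T}

theorem Vopen (hU : Opn U) (hzU : z ∈ U) (hr : ∀ q ∈ U, 1 ≤ r q ∧ TailIn q (r q) U) :
    Opn {w | Vgen z U r w} := by
  intro w hw
  simp only [mem_setOf_eq] at hw
  refine ⟨⟨r w + 1, ?_, ?_⟩, ?_, ?_⟩
  · exact fun l t hl => Vgen.tailAx w l t hw (by omega)
  · exact fun k s t hk => Vgen.tailHp w k s t hw hk
  · rintro t rfl p
    have hUt : Pt.sh t ∈ U := Vsub hzU hr _ hw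
    refine Set.Finite.subset ((hU _ hUt).2.1 t rfl p) ?_
    intro x hx
    simp only [mem_setOf_eq] at hx ⊢
    exact fun hu => hx (Vgen.pcSh t p x hw hu)
  · rintro p l t rfl
    have hUt : Pt.ax p l t ∈ U := Vsub hzU hr _ hw
    obtain ⟨hf1, hf2⟩ := (hU _ hUt).2.2 p l t rfl
    constructor
    · refine Set.Finite.subset hf1 ?_
      intro x hx
      simp only [mem_setOf_eq] at hx ⊢
      exact fun hu => hx (Vgen.pcOut p l t x hw hu)
    · refine Set.Finite.subset hf2 ?_
      intro s hs
      simp only [mem_setOf_eq] at hs ⊢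
      exact fun hu => hs (Vgen.pcIn p l s t hw hu)

theorem Wopen (hU : Opn U) (hzU : z ∈ U) (hr : ∀ q ∈ U, 1 ≤ r q ∧ TailIn q (r q) U)
    (hw₀V : ¬ Vgen z U r w₀)
    (hw₀F : ¬ ∃ q t, Vgen z U r q ∧ w₀ = Pt.ax q (r q - 1) t) :
    Opn {w | Wgen z U r w₀ w} := by
  intro w hw
  simp only [mem_setOf_eq] at hw
  refine ⟨⟨lvl z + 2, ?_, ?_⟩, ?_, ?_⟩
  · exact fun l t hl => Wgen.tailAx w l t hw hl
  · exact fun k s t hk => Wgen.tailHp w k s t hw hk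
  · rintro t rfl p
    have hsub : {x : T | Pt.hp p 0 t x ∉ {w | Wgen z U r w₀ w}} ⊆
        {x : T | Vgen z U r (Pt.hp p 0 t x)} := by
      intro x hx
      simp only [mem_setOf_eq] at hx ⊢
      by_contra hnv
      exact hx (Wgen.pcSh t p x hw hnv)
    refine Set.Finite.subset (finV_tgt hzU hr ?_ ?_ ?_) hsub
    · rintro ⟨hvp, hrp⟩
      have := (hr p (Vsub hzU hr p hvp)).1
      omega
    · rintro pz kz tz hz ⟨-, hK, -⟩
      omega
    · rintro tz hz ⟨-, rfl⟩
      exact Wdisj hw₀V _ hw (hz ▸ Vgen.base)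
  · rintro p l t rfl
    have key : Vgen z U r p → l + 1 < r p := by
      intro hvp
      rcases Wax_inv hw₀V hw with heq | hnvp
      · -- w₀ = ax p l t
        have h1 : ¬ r p ≤ l := fun hle => hw₀V (heq ▸ Vgen.tailAx p l t hvp hle)
        have h2 : l ≠ r p - 1 := fun hl => hw₀F ⟨p, t, hvp, by rw [heq, hl]⟩
        have h3 : 1 ≤ r p := (hr p (Vsub hzU hr p hvp)).1
        omega
      · exact absurd hvp hnvp
    constructor
    · have hsub : {x : T | Pt.hp p (l+1) t x ∉ {w | Wgen z U r w₀ w}} ⊆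
          {x : T | Vgen z U r (Pt.hp p (l+1) t x)} := by
        intro x hx
        simp only [mem_setOf_eq] at hx ⊢
        by_contra hnv
        exact hx (Wgen.pcOut p l t x hw hnv)
      refine Set.Finite.subset (finV_tgt hzU hr ?_ ?_ ?_) hsub
      · rintro ⟨hvp, hrp⟩
        have := key hvp
        omega
      · rintro pz kz tz hz ⟨rfl, hK, rfl⟩
        have hlk : l = kz := by omega
        subst hlk
        exact Wdisj hw₀V _ hw (hz ▸ Vgen.base)
      · rintro tz hz ⟨hK, -⟩
        omega
    · have hsub : {s : T | Pt.hp p l s t ∉ {w | Wgen z U r w₀ w}} ⊆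
          {s : T | Vgen z U r (Pt.hp p l s t)} := by
        intro s hs
        simp only [mem_setOf_eq] at hs ⊢
        by_contra hnv
        exact hs (Wgen.pcIn p l s t hw hnv)
      refine Set.Finite.subset (finV_src hzU hr ?_ ?_) hsub
      · rintro ⟨hvp, hrp⟩
        have := key hvp
        omega
      · rintro pz kz tz hz ⟨rfl, rfl, rfl⟩
        exact Wdisj hw₀V _ hw (hz ▸ Vgen.base)

end S10

namespace S10

variable {T : Type u} {z : Pt T} {U : Set (Pt T)} {r : Pt T → ℕ}

theorem isOpen_iff' {U : Set (Pt T)} : IsOpen U ↔ Opn U := Iff.rfl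

theorem closure_V_sub (hU : Opn U) (hzU : z ∈ U) (hr : ∀ q ∈ U, 1 ≤ r q ∧ TailIn q (r q) U) :
    closure {w | Vgen z U r w} ⊆ U := by
  intro w hwcl
  by_cases hwV : Vgen z U r w
  · exact Vsub hzU hr w hwV
  by_cases hwF : ∃ q t, Vgen z U r q ∧ w = Pt.ax q (r q - 1) t
  · obtain ⟨q, t, hq, rfl⟩ := hwF
    have hqU : q ∈ U := Vsub hzU hr q hq
    exact (hr q hqU).2.1 (r q - 1) t (by have := (hr q hqU).1; omega)
  exfalso
  have hop : IsOpen {w' | Wgen z U r w w'} := isOpen_iff'.mpr (Wopen hU hzU hr hwV hwF)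
  obtain ⟨y, hyW, hyV⟩ := (mem_closure_iff.mp hwcl) _ hop Wgen.base
  exact Wdisj hwV y hyW hyV

instance : RegularSpace (Pt T) := by
  refine RegularSpace.of_exists_mem_nhds_isClosed_subset fun a s hs => ?_
  obtain ⟨U, hUs, hUo, haU⟩ := mem_nhds_iff.mp hs
  have hU : Opn U := hUo
  have hr : ∀ q ∈ U, 1 ≤ rfun U q ∧ TailIn q (rfun U q) U := fun q hq => rfun_spec hU hq
  refine ⟨closure {w | Vgen a U (rfun U) w}, ?_, isClosed_closure,
    (closure_V_sub hU haU hr).trans hUs⟩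
  exact Filter.mem_of_superset ((isOpen_iff'.mpr (Vopen hU haU hr)).mem_nhds Vgen.base) subset_closure


/-- The axis point of the copy of `p` at level `L`, slot `t` (level 0 axis is shared). -/
def axisPt (p : Pt T) : ℕ → T → Pt T
  | 0, t => Pt.sh t
  | (l+1), t => Pt.ax p l t

section Const

variable {f : Pt T → ℝ} (hf : Continuous f)

theorem cont_tail (hf : Continuous f) (z : Pt T) {ε : ℝ} (hε : 0 < ε) :
    ∃ r : ℕ, ∀ L ≥ r, ∀ t, dist (f (axisPt z (L+1) t)) (f z) < ε := by
  have hU : IsOpen (f ⁻¹' Metric.ball (f z) ε) := (Metric.isOpen_ball).preimage hf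
  have hz : z ∈ f ⁻¹' Metric.ball (f z) ε := by
    simp [Metric.mem_ball_self hε]
  obtain ⟨⟨r, hr⟩, -, -⟩ := (isOpen_iff'.mp hU) z hz
  refine ⟨r, fun L hL t => ?_⟩
  have : Pt.ax z L t ∈ f ⁻¹' Metric.ball (f z) ε := hr.1 L t (by omega)
  simpa [axisPt, Metric.mem_ball] using this

/-- Outgoing-piece continuity at the axis point `axisPt p L s`. -/
theorem cont_tgt (hf : Continuous f) (p : Pt T) (L : ℕ) (s : T) {ε : ℝ} (hε : 0 < ε) :
    {x : T | ε ≤ dist (f (Pt.hp p L s x)) (f (axisPt p L s))}.Finite := by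
  have hU : IsOpen (f ⁻¹' Metric.ball (f (axisPt p L s)) ε) := (Metric.isOpen_ball).preimage hf
  have hz : axisPt p L s ∈ f ⁻¹' Metric.ball (f (axisPt p L s)) ε := by
    simp [Metric.mem_ball_self hε]
  obtain ⟨-, hsh, hax⟩ := (isOpen_iff'.mp hU) _ hz
  cases L with
  | zero =>
      refine Set.Finite.subset (hsh s rfl p) ?_
      intro x hx
      simp only [mem_setOf_eq] at hx
      simp only [mem_setOf_eq, mem_preimage, Metric.mem_ball, not_lt]
      exact hx
  | succ l =>
      refine Set.Finite.subset ((hax p l s rfl).1) ?_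
      intro x hx
      simp only [mem_setOf_eq] at hx
      simp only [mem_setOf_eq, mem_preimage, Metric.mem_ball, not_lt]
      exact hx

/-- Incoming-piece continuity at the axis point `axisPt p (L+1) t`. -/
theorem cont_src (hf : Continuous f) (p : Pt T) (L : ℕ) (t : T) {ε : ℝ} (hε : 0 < ε) :
    {s : T | ε ≤ dist (f (Pt.hp p L s t)) (f (axisPt p (L+1) t))}.Finite := by
  have hU : IsOpen (f ⁻¹' Metric.ball (f (axisPt p (L+1) t)) ε) := (Metric.isOpen_ball).preimage hf
  have hz : axisPt p (L+1) t ∈ f ⁻¹' Metric.ball (f (axisPt p (L+1) t)) ε := by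
    simp [Metric.mem_ball_self hε]
  obtain ⟨-, -, hax⟩ := (isOpen_iff'.mp hU) _ hz
  refine Set.Finite.subset ((hax p L t rfl).2) ?_
  intro x hx
  simp only [mem_setOf_eq] at hx
  simp only [mem_setOf_eq, mem_preimage, Metric.mem_ball, not_lt]
  exact hx

/-- The key combinatorial step: given an injective sequence of slots at level `L` in the copy
of `p`, for all slots `t'` at level `L+1` outside a countable bad set, the value at `t'`
is approximated by the values at `σ n` for all but finitely many `n`. -/
theorem key (hf : Continuous f) (p : Pt T) (L : ℕ) (σ : ℕ → T) (hσ : Function.Injective σ) :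
    ∃ B : Set T, B.Countable ∧ ∀ t' ∉ B, ∀ ε : ℝ, 0 < ε →
      {n : ℕ | ε ≤ dist (f (axisPt p (L+1) t')) (f (axisPt p L (σ n)))}.Finite := by
  classical
  refine ⟨⋃ (n : ℕ), ⋃ (m : ℕ),
    {x : T | 1/(m+1 : ℝ) ≤ dist (f (Pt.hp p L (σ n) x)) (f (axisPt p L (σ n)))}, ?_, ?_⟩
  · exact Set.countable_iUnion (fun n => Set.countable_iUnion (fun m =>
      (cont_tgt hf p L (σ n) (by positivity)).countable))
  · intro t' ht' ε hε
    obtain ⟨m, hm⟩ := exists_nat_one_div_lt (ε := ε/2) (by linarith)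
    have hE : {s : T | ε/2 ≤ dist (f (Pt.hp p L s t')) (f (axisPt p (L+1) t'))}.Finite :=
      cont_src hf p L t' (by linarith)
    have hpre : {n : ℕ | σ n ∈ {s : T | ε/2 ≤ dist (f (Pt.hp p L s t'))
        (f (axisPt p (L+1) t'))}}.Finite := hE.preimage (hσ.injOn)
    refine Set.Finite.subset hpre ?_
    intro n hn
    simp only [mem_setOf_eq] at hn ⊢
    by_contra hcon
    push_neg at hcon
    -- hcon : dist (f (hp p L (σ n) t')) (f (axisPt p (L+1) t')) < ε/2
    have h1 : dist (f (Pt.hp p L (σ n) t')) (f (axisPt p L (σ n))) < 1/(m+1 : ℝ) := by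
      by_contra h1
      push_neg at h1
      exact ht' (Set.mem_iUnion.mpr ⟨n, Set.mem_iUnion.mpr ⟨m, h1⟩⟩)
    have : dist (f (axisPt p (L+1) t')) (f (axisPt p L (σ n))) < ε := by
      calc dist (f (axisPt p (L+1) t')) (f (axisPt p L (σ n)))
          ≤ dist (f (axisPt p (L+1) t')) (f (Pt.hp p L (σ n) t')) +
            dist (f (Pt.hp p L (σ n) t')) (f (axisPt p L (σ n))) := dist_triangle _ _ _
        _ < ε/2 + 1/(m+1 : ℝ) := by
            rw [dist_comm] at hcon
            exact add_lt_add_of_lt_of_le hcon h1.le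
        _ < ε/2 + ε/2 := by linarith
        _ = ε := by ring
    exact absurd this (not_lt.mpr hn)

end Const

end S10

namespace S10

variable {T : Type u}

theorem exists_out (hT : ℵ₀ < #T) {B : Set T} (hB : B.Countable) : ∃ t, t ∉ B := by
  by_contra h
  push_neg at h
  have : Countable T := Set.countable_univ_iff.mp (hB.mono (fun t _ => h t))
  exact absurd Cardinal.mk_le_aleph0 (not_le.mpr hT)

theorem constancy (hT : ℵ₀ < #T) (f : Pt T → ℝ) (hf : Continuous f) :
    ∃ c : ℝ, ∀ w : Pt T, f w = c := by
  haveI : Infinite T := Cardinal.infinite_iff.mpr hT.le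
  set τ : ℕ ↪ T := Infinite.natEmbedding T with hτ
  obtain ⟨B0, hB0c, hB0⟩ := key hf (Pt.sh (τ 0)) 0 (fun n => τ n) τ.injective
  obtain ⟨t0, ht0⟩ := exists_out hT hB0c
  set lam := f (axisPt (Pt.sh (τ 0)) 1 t0) with hlam
  have lem1 : ∀ p : Pt T, {t : T | f (axisPt p 1 t) ≠ lam}.Countable := by
    intro p
    obtain ⟨B, hBc, hB⟩ := key hf p 0 (fun n => τ n) τ.injective
    refine Set.Countable.mono ?_ hBc
    intro t' ht'
    simp only [mem_setOf_eq] at ht'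
    by_contra hnotB
    apply ht'
    apply eq_of_forall_dist_le
    intro ε hε
    have hfin1 := hB t' hnotB (ε/2) (by linarith)
    have hfin2 := hB0 t0 ht0 (ε/2) (by linarith)
    obtain ⟨n, hn⟩ := (hfin1.union hfin2).exists_notMem
    simp only [Set.mem_union, mem_setOf_eq, not_or, not_le] at hn
    have h1 : dist (f (axisPt p 1 t')) (f (axisPt p 0 (τ n))) < ε/2 := hn.1
    have h2 : dist lam (f (axisPt (Pt.sh (τ 0)) 0 (τ n))) < ε/2 := hn.2
    have hsame : axisPt p 0 (τ n) = axisPt (Pt.sh (τ 0)) 0 (τ n) := rfl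
    calc dist (f (axisPt p 1 t')) lam
        ≤ dist (f (axisPt p 1 t')) (f (axisPt p 0 (τ n))) +
          dist (f (axisPt p 0 (τ n))) lam := dist_triangle _ _ _
      _ ≤ ε/2 + ε/2 := by
          rw [hsame, dist_comm (f (axisPt (Pt.sh (τ 0)) 0 (τ n))) lam]
          exact add_le_add h1.le h2.le
      _ = ε := by ring
  have lemC : ∀ (p : Pt T) (L : ℕ), {t : T | f (axisPt p (L+1) t) ≠ lam}.Countable := by
    intro p L
    induction L with
    | zero => exact lem1 p
    | succ L ih =>
        have hinf : ({t : T | f (axisPt p (L+1) t) ≠ lam}ᶜ).Infinite := by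
          by_contra hni
          rw [Set.not_infinite] at hni
          have hcu : (univ : Set T).Countable := by
            have := ih.union hni.countable
            rwa [Set.union_compl_self] at this
          have : Countable T := Set.countable_univ_iff.mp hcu
          exact absurd Cardinal.mk_le_aleph0 (not_le.mpr hT)
        set σ : ℕ ↪ ↥({t : T | f (axisPt p (L+1) t) ≠ lam}ᶜ) := hinf.natEmbedding with hσdef
        have hinj : Function.Injective (fun n => (σ n : T)) := by
          intro a b hab
          exact σ.injective (Subtype.ext hab)
        have hval : ∀ n, f (axisPt p (L+1) ((σ n : T))) = lam := by
          intro n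
          have := (σ n).2
          simp only [Set.mem_compl_iff, mem_setOf_eq, not_not] at this
          exact this
        obtain ⟨B, hBc, hB⟩ := key hf p (L+1) (fun n => (σ n : T)) hinj
        refine Set.Countable.mono ?_ hBc
        intro t' ht'
        simp only [mem_setOf_eq] at ht'
        by_contra hnotB
        apply ht'
        apply eq_of_forall_dist_le
        intro ε hε
        obtain ⟨n, hn⟩ := (hB t' hnotB ε hε).exists_notMem
        simp only [mem_setOf_eq, not_le] at hn
        rw [hval n] at hn
        exact hn.le
  refine ⟨lam, fun z => ?_⟩
  apply eq_of_forall_dist_le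
  intro ε hε
  obtain ⟨r, hr⟩ := cont_tail hf z hε
  obtain ⟨t, ht⟩ := exists_out hT (lemC z r)
  simp only [mem_setOf_eq, not_not] at ht
  have h1 : dist (f (axisPt z (r+1) t)) (f z) < ε := hr r le_rfl t
  rw [ht] at h1
  rw [dist_comm]
  exact h1.le


def code : Pt T → List (ULift.{u} ℕ ⊕ T)
  | .sh t => [Sum.inr t]
  | .ax p l t => Sum.inl ⟨0⟩ :: Sum.inl ⟨l⟩ :: Sum.inr t :: code p
  | .hp p k s t => Sum.inl ⟨1⟩ :: Sum.inl ⟨k⟩ :: Sum.inr s :: Sum.inr t :: code p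

theorem code_inj : Function.Injective (code : Pt T → List (ULift.{u} ℕ ⊕ T)) := by
  intro a
  induction a with
  | sh t =>
      intro b hb
      cases b with
      | sh t' => simp [code] at hb; rw [hb]
      | ax p' l' t' => simp [code] at hb
      | hp p' k' s' t' => simp [code] at hb
  | ax p l t ih =>
      intro b hb
      cases b with
      | sh t' => simp [code] at hb
      | ax p' l' t' =>
          simp only [code, List.cons.injEq, Sum.inl.injEq, Sum.inr.injEq] at hb
          obtain ⟨-, hl, ht, hc⟩ := hb
          rw [ih hc, ULift.up_injective hl, ht]
      | hp p' k' s' t' =>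
          simp only [code, List.cons.injEq, Sum.inl.injEq, Sum.inr.injEq] at hb
          exact absurd (ULift.up_injective hb.1) (by omega)
  | hp p k s t ih =>
      intro b hb
      cases b with
      | sh t' => simp [code] at hb
      | ax p' l' t' =>
          simp only [code, List.cons.injEq, Sum.inl.injEq, Sum.inr.injEq] at hb
          exact absurd (ULift.up_injective hb.1) (by omega)
      | hp p' k' s' t' =>
          simp only [code, List.cons.injEq, Sum.inl.injEq, Sum.inr.injEq] at hb
          obtain ⟨-, hk, hs, ht, hc⟩ := hb
          rw [ih hc, ULift.up_injective hk, hs, ht]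

theorem mk_pt (hT : ℵ₀ ≤ #T) : #(Pt T) = #T := by
  haveI : Infinite T := Cardinal.infinite_iff.mpr hT
  apply le_antisymm
  · have h1 : #(Pt T) ≤ #(List (ULift.{u} ℕ ⊕ T)) := Cardinal.mk_le_of_injective code_inj
    rw [Cardinal.mk_list_eq_mk] at h1
    have h2 : #(ULift.{u} ℕ ⊕ T) = ℵ₀ + #T := by
      simp [Cardinal.mk_sum, Cardinal.mk_uLift, Cardinal.lift_id]
    rw [h2, Cardinal.add_eq_right hT hT] at h1
    exact h1
  · exact Cardinal.mk_le_of_injective (fun a b h => Pt.sh.inj h)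

end S10

/-- for every uncountable cardinal `κ` there is a regular T1
space `L` of cardinality `κ` on which every continuous real-valued function is
constant. -/
theorem stmt10 (κ : Cardinal.{u}) (hκ : ℵ₀ < κ) :
    ∃ (L : Type u) (_ : TopologicalSpace L),
      RegularSpace L ∧ T1Space L ∧ #L = κ ∧
      ∀ f : L → ℝ, Continuous f → ∃ c, ∀ x, f x = c := by
  have hT : ℵ₀ < #(κ.ord.ToType) := by
    rw [Cardinal.mk_ord_toType]
    exact hκ
  refine ⟨S10.Pt (κ.ord.ToType), inferInstance, inferInstance, inferInstance, ?_, ?_⟩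
  · rw [S10.mk_pt hT.le, Cardinal.mk_ord_toType]
  · exact fun f hf => S10.constancy hT f hf
end

section
/- Let Y be a topological space, let κ be an infinite cardinal, and let E ⊆ Y be a dense subset such that the subspace E is not resolvable (i.e., E does not contain two disjoint subsets each dense in E) and |Y \ E| ≤ κ. Then Y is not κ⁺-resolvable. -/
open Cardinal

/-- A space is `κ`-resolvable if it has `κ` many pairwise disjoint dense
subsets. -/
def IsKResolvable (X : Type u) [TopologicalSpace X] (κ : Cardinal.{u}) : Prop :=
  ∃ D : κ.out → Set X, (∀ i, Dense (D i)) ∧ Pairwise (Function.onFun Disjoint D)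

/-- if `E` is a dense subset of `Y` whose subspace is
irresolvable (it has no two disjoint dense subsets) and `|Y \ E| ≤ κ` with `κ`
infinite, then `Y` is not `κ⁺`-resolvable. -/
theorem stmt11 {Y : Type u} [TopologicalSpace Y] (κ : Cardinal.{u})
    (hκ : ℵ₀ ≤ κ) (E : Set Y) (hE : Dense E)
    (hirr : ¬ ∃ D₁ D₂ : Set E, Dense D₁ ∧ Dense D₂ ∧ Disjoint D₁ D₂)
    (hcard : #↥(Set.univ \ E) ≤ κ) :
    ¬ IsKResolvable Y (Order.succ κ) := by
  rintro ⟨D, hD, hdisj⟩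
  -- indices whose dense set escapes E inject into Y \ E
  have hsub : #↥({i | D i ⊆ E}ᶜ : Set (Order.succ κ).out) ≤ κ := by
    have hpt : ∀ i : ↥({i | D i ⊆ E}ᶜ : Set (Order.succ κ).out),
        ∃ y : ↥(Set.univ \ E), (y : Y) ∈ D i := by
      rintro ⟨i, hi⟩
      have hi' : ¬ D i ⊆ E := hi
      rw [Set.not_subset] at hi'
      obtain ⟨y, hy, hyE⟩ := hi'
      exact ⟨⟨y, ⟨trivial, hyE⟩⟩, hy⟩
    choose f hf using hpt
    have hinj : Function.Injective f := by
      intro i j hij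
      apply Subtype.ext
      by_contra hne
      have hd := hdisj hne
      have h1 : (f i : Y) ∈ D i := hf i
      have h2 : (f i : Y) ∈ D j := by rw [hij]; exact hf j
      exact Set.disjoint_left.mp hd h1 h2
    exact (Cardinal.mk_le_of_injective hinj).trans hcard
  -- there are two distinct indices with D i ⊆ E
  have htwo : ∃ i j : (Order.succ κ).out, i ≠ j ∧ D i ⊆ E ∧ D j ⊆ E := by
    by_contra h
    push_neg at h
    have hone : #↥({i | D i ⊆ E} : Set (Order.succ κ).out) ≤ 1 := by
      rw [Cardinal.mk_le_one_iff_set_subsingleton]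
      intro i hi j hj
      by_contra hne
      exact hne (h i j hne hi hj).elim
    have hsum := Cardinal.mk_sum_compl ({i | D i ⊆ E} : Set (Order.succ κ).out)
    have hout : #((Order.succ κ).out) = Order.succ κ := Cardinal.mk_out _
    have : Order.succ κ ≤ κ := by
      calc Order.succ κ = _ := (hout).symm
        _ = _ := hsum.symm
        _ ≤ 1 + κ := add_le_add hone hsub
        _ ≤ κ + κ := add_le_add (le_trans (by norm_num) hκ) le_rfl
        _ = κ := Cardinal.add_eq_self hκ
    exact absurd this (not_le.mpr (Order.lt_succ κ))
  obtain ⟨i, j, hne, hiE, hjE⟩ := htwo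
  -- sets contained in E that are dense in Y are dense in the subspace E
  have hdense : ∀ k, D k ⊆ E → Dense (Subtype.val ⁻¹' D k : Set ↥E) := by
    intro k hk
    rw [dense_iff_inter_open]
    rintro U hU hUne
    rw [isOpen_induced_iff] at hU
    obtain ⟨V, hV, rfl⟩ := hU
    obtain ⟨⟨x, hxE⟩, hxV⟩ := hUne
    obtain ⟨y, hyV, hyD⟩ := (hD k).inter_open_nonempty V hV ⟨x, hxV⟩
    exact ⟨⟨y, hk hyD⟩, hyV, hyD⟩
  exact hirr ⟨Subtype.val ⁻¹' D i, Subtype.val ⁻¹' D j, hdense i hiE, hdense j hjE,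
    (hdisj hne).preimage _⟩
end

section
/- Let X be a topological space such that every continuous real-valued function on X is constant, let λ ≥ 1 be a cardinal, and let 𝓔 be a nonempty web in the product space X^λ. Then every continuous real-valued function on the subspace ⋃𝓔 of X^λ is constant. -/
open Cardinal

/-- if every continuous real-valued function on `X` is constant
and `𝓔` is a nonempty web in `X^λ`, then every continuous real-valued function
on the subspace `⋃𝓔` is constant. -/
theorem stmt13 {X : Type u} [TopologicalSpace X]
    (hX : ∀ f : X → ℝ, Continuous f → ∃ c, ∀ x, f x = c)
    (lam : Cardinal.{u}) (hlam : 1 ≤ lam)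
    (𝓔 : Set (Set (lam.out → X))) (hne : 𝓔.Nonempty) (hweb : IsWeb 𝓔) :
    ∀ f : ↥(⋃₀ 𝓔) → ℝ, Continuous f → ∃ c, ∀ x, f x = c := by
  intro f hf
  have hout : Nonempty lam.out := by
    rw [← Cardinal.mk_ne_zero_iff, Cardinal.mk_out]
    intro h
    rw [h] at hlam
    exact absurd hlam (by simp)
  by_cases hXne : Nonempty X
  · obtain ⟨hhomeo, hchain⟩ := hweb
    -- f is constant on each member of the web
    have key : ∀ A ∈ 𝓔, ∃ c, ∀ x : ↥(⋃₀ 𝓔), ↑x ∈ A → f x = c := by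
      intro A hA
      obtain ⟨e⟩ := hhomeo A hA
      have hsub : A ⊆ ⋃₀ 𝓔 := Set.subset_sUnion_of_mem hA
      have hg : Continuous (f ∘ Set.inclusion hsub ∘ e.symm) :=
        hf.comp ((continuous_inclusion hsub).comp e.symm.continuous)
      obtain ⟨c, hc⟩ := hX _ hg
      refine ⟨c, fun x hx => ?_⟩
      have := hc (e ⟨(x : lam.out → X), hx⟩)
      simp only [Function.comp_apply, Homeomorph.symm_apply_apply] at this
      exact this
    -- base point
    obtain ⟨A₀, hA₀⟩ := hne
    obtain ⟨e₀⟩ := hhomeo A₀ hA₀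
    obtain ⟨x₀, hx₀⟩ : ∃ x : lam.out → X, x ∈ A₀ :=
      ⟨(e₀.symm (Classical.arbitrary X)).1, (e₀.symm (Classical.arbitrary X)).2⟩
    have hx₀' : x₀ ∈ ⋃₀ 𝓔 := ⟨A₀, hA₀, hx₀⟩
    refine ⟨f ⟨x₀, hx₀'⟩, ?_⟩
    have claim : ∀ B ∈ 𝓔, ∀ y : ↥(⋃₀ 𝓔), ↑y ∈ B → f y = f ⟨x₀, hx₀'⟩ := by
      intro B hB
      obtain ⟨n, C, hC, h0, hlast, hint⟩ := hchain A₀ hA₀ B hB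
      have P : ∀ k : Fin (n + 1), ∀ y : ↥(⋃₀ 𝓔), ↑y ∈ C k → f y = f ⟨x₀, hx₀'⟩ := by
        intro k
        induction k using Fin.induction with
        | zero =>
          intro y hy
          obtain ⟨c, hc⟩ := key (C 0) (hC 0)
          rw [hc y hy, ← hc ⟨x₀, hx₀'⟩ (h0 ▸ hx₀)]
        | succ i ih =>
          intro y hy
          obtain ⟨z, hz1, hz2⟩ := hint i
          have hz : z ∈ ⋃₀ 𝓔 := ⟨C i.succ, hC i.succ, hz2⟩
          obtain ⟨c, hc⟩ := key (C i.succ) (hC i.succ)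
          rw [hc y hy, ← hc ⟨z, hz⟩ hz2]
          exact ih ⟨z, hz⟩ hz1
      intro y hy
      exact P (Fin.last n) y (hlast ▸ hy)
    intro x
    obtain ⟨B, hB, hxB⟩ := x.2
    exact claim B hB x hxB
  · have hE : IsEmpty X := not_nonempty_iff.mp hXne
    have hempty : IsEmpty ↥(⋃₀ 𝓔) := by
      constructor
      rintro ⟨x, -⟩
      exact hE.false (x (Classical.arbitrary lam.out))
    exact ⟨0, fun x => hempty.elim x⟩
end
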